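/- arXiv:1505.06157 — 7 statements merged into one kernel-verified Lean document; each statement's English description precedes it below -/
import Mathlib

section
/- Let u be a classical solution of the n-vortex equation with finite energy. Then the integrals ∫₀^R r u'(r)² dr, ∫₀^R (n²/r) u(r)² dr, ∫₀^R r u(r)² dr and ∫₀^R r u(r)⁴/(1 + α u(r)²) dr are all finite, and the identity −∫₀^R r u'(r)² dr = ∫₀^R [ (n²/r) u(r)² + 2κ r u(r)² − 2 r u(r)⁴/(1 + α u(r)²) ] dr holds. -/
open MeasureTheory Set Filter

noncomputable section

/-- The Bessel function `J₀`. -/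
def besselJ0 (x : ℝ) : ℝ :=
  ∑' m : ℕ, (-1 : ℝ) ^ m * (x / 2) ^ (2 * m) / ((Nat.factorial m : ℝ)) ^ 2

/-- The smallest positive zero of `J₀` (≈ 2.404826). -/
def besselR0 : ℝ := sInf {x : ℝ | 0 < x ∧ besselJ0 x = 0}

/-- `u` is a classical solution of the `n`-vortex equation with parameters `(α, n, κ, R)`. -/
def IsVortexSol (α : ℝ) (n : ℤ) (κ R : ℝ) (u : ℝ → ℝ) : Prop :=
  ContinuousOn u (Icc 0 R) ∧
  (∀ r ∈ Ioo (0 : ℝ) R, DifferentiableAt ℝ u r ∧ DifferentiableAt ℝ (deriv u) r) ∧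
  u 0 = 0 ∧ u R = 0 ∧
  ∀ r ∈ Ioo (0 : ℝ) R,
    deriv (fun s => s * deriv u s) r - ((n : ℝ) ^ 2 / r) * u r
      + 2 * r * (u r) ^ 3 / (1 + α * (u r) ^ 2) - 2 * κ * r * u r = 0

/-- `u` has finite energy. -/
def FiniteEnergy (α R : ℝ) (u : ℝ → ℝ) : Prop :=
  IntegrableOn
    (fun r => r * (deriv u r) ^ 2 + (u r) ^ 2 / r + r * Real.log (1 + α * (u r) ^ 2))
    (Ioo 0 R)

/-- The energy flux `Q(u) = 2π ∫₀^R r u(r)² dr`. -/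
def fluxQ (R : ℝ) (u : ℝ → ℝ) : ℝ := 2 * Real.pi * ∫ r in Ioo (0 : ℝ) R, r * (u r) ^ 2

/-- The tent function with parameters `a` and `b`. -/
def tent (a b : ℝ) : ℝ → ℝ := fun r => if r ≤ a then (b / a) * r else (b / a) * (2 * a - r)

/-- The action functional `I_κ`. -/
def actI (α : ℝ) (n : ℤ) (κ R : ℝ) (u : ℝ → ℝ) : ℝ :=
  (1 / 2) * ∫ r in Ioo (0 : ℝ) R,
    (r * (deriv u r) ^ 2 + ((n : ℝ) ^ 2 / r) * (u r) ^ 2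
      - 2 * (α⁻¹ - κ) * r * (u r) ^ 2 + 2 * (α ^ 2)⁻¹ * r * Real.log (1 + α * (u r) ^ 2))

/-- The action functional `𝓘`. -/
def actI0 (α : ℝ) (n : ℤ) (R : ℝ) (u : ℝ → ℝ) : ℝ :=
  (1 / 2) * ∫ r in Ioo (0 : ℝ) R,
    (r * (deriv u r) ^ 2 + ((n : ℝ) ^ 2 / r) * (u r) ^ 2
      - 2 * α⁻¹ * r * (u r) ^ 2 + 2 * (α ^ 2)⁻¹ * r * Real.log (1 + α * (u r) ^ 2))

/-- The functional `γ_κ`. -/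
def gammaK (α : ℝ) (n : ℤ) (κ R : ℝ) (u : ℝ → ℝ) : ℝ :=
  (1 / 2) * ∫ r in Ioo (0 : ℝ) R,
    (r * (deriv u r) ^ 2 + ((n : ℝ) ^ 2 / r) * (u r) ^ 2
      - 2 * (α⁻¹ - κ) * r * (u r) ^ 2 + 2 * α⁻¹ * r * (u r) ^ 2 / (1 + α * (u r) ^ 2))

/-- Membership in the class `X`. -/
def MemX (R : ℝ) (u : ℝ → ℝ) : Prop :=
  ContinuousOn u (Icc 0 R) ∧ ContDiffOn ℝ 1 u (Ioo 0 R) ∧ u 0 = 0 ∧ u R = 0 ∧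
    IntegrableOn (fun r => r * (deriv u r) ^ 2 + (u r) ^ 2 / r) (Ioo 0 R)

/-- Membership in the class `X`, allowing finitely many exceptional points. -/
def MemX' (R : ℝ) (u : ℝ → ℝ) : Prop :=
  ContinuousOn u (Icc 0 R) ∧ (∃ S : Finset ℝ, ContDiffOn ℝ 1 u (Ioo 0 R \ ↑S)) ∧
    u 0 = 0 ∧ u R = 0 ∧
    IntegrableOn (fun r => r * (deriv u r) ^ 2 + (u r) ^ 2 / r) (Ioo 0 R)

/-- The admissible class `𝒜`. -/
def Admissible (α R : ℝ) (v : ℝ → ℝ) : Prop :=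
  (∃ K : NNReal, LipschitzOnWith K v (Icc 0 R)) ∧ v 0 = 0 ∧ v R = 0 ∧ FiniteEnergy α R v

end

open Topology

/-!
Multiplying the equation by `u` shows that the integrand `r u'² + u · (r u')'` of the identity is
the derivative of the flux `r u' u`, so the identity says that the flux vanishes at both ends.
Near `R` the derivative of `r u'` is bounded, so `r u'` is bounded and `r u' u → 0` since
`u(R) = 0`. Near `0` the flux has a limit because its derivative is integrable, and the limit is
`0` because `|r u' u| ≤ r (r u'² + u²/r)`, where `r u'² + u²/r` is integrable and hence cannot stay
above `c / r`.
-/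

lemma MeasureTheory.IntegrableOn.of_add_of_nonneg {X : Type*} [MeasurableSpace X] {μ : Measure X}
    {f g : X → ℝ} {s : Set X} (hs : MeasurableSet s) (hfg : IntegrableOn (fun x => f x + g x) s μ)
    (hf : AEStronglyMeasurable f (μ.restrict s)) (hf0 : ∀ x ∈ s, 0 ≤ f x)
    (hg0 : ∀ x ∈ s, 0 ≤ g x) : IntegrableOn f s μ := by
  refine hfg.mono' hf ?_
  filter_upwards [ae_restrict_mem hs] with x hx
  rw [Real.norm_eq_abs, abs_of_nonneg (hf0 x hx)]
  linarith [hg0 x hx]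

lemma frequently_sub_mul_lt_of_integrableOn {g : ℝ → ℝ} {a b c : ℝ} (hab : a < b)
    (hg : IntegrableOn g (Ioo a b)) (hc : 0 < c) : ∃ᶠ x in 𝓝[>] a, (x - a) * g x < c := by
  intro hev
  obtain ⟨a', ha', hsub⟩ := (mem_nhdsGT_iff_exists_Ioo_subset' hab).1 hev
  set b' := min a' b
  have hab' : a < b' := lt_min ha' hab
  have hinv : IntervalIntegrable (fun x => (x - a)⁻¹) volume a b' := by
    rw [intervalIntegrable_iff_integrableOn_Ioo_of_le hab'.le]
    refine ((hg.mono_set (Ioo_subset_Ioo_right (min_le_right _ _))).const_mul c⁻¹).mono'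
      ((measurable_id.sub_const a).inv.aestronglyMeasurable) ?_
    filter_upwards [ae_restrict_mem measurableSet_Ioo] with x hx
    have hxa : 0 < x - a := sub_pos.2 hx.1
    have hle : c ≤ (x - a) * g x := not_lt.1 (hsub ⟨hx.1, hx.2.trans_le (min_le_left _ _)⟩)
    rw [Real.norm_eq_abs, abs_of_pos (inv_pos.2 hxa), inv_le_iff_one_le_mul₀ hxa]
    calc 1 = c⁻¹ * c := (inv_mul_cancel₀ hc.ne').symm
      _ ≤ c⁻¹ * ((x - a) * g x) := by gcongr
      _ = c⁻¹ * g x * (x - a) := by ring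
  rcases intervalIntegrable_sub_inv_iff.1 hinv with h | h
  · exact hab'.ne h
  · exact h left_mem_uIcc

lemma exists_tendsto_nhdsGT_of_hasDerivAt {f f' : ℝ → ℝ} {a b : ℝ} (hab : a < b)
    (hf : ∀ x ∈ Ioo a b, HasDerivAt f (f' x) x) (hf' : IntegrableOn f' (Ioo a b)) :
    ∃ L, Tendsto f (𝓝[>] a) (𝓝 L) := by
  set c := (a + b) / 2
  have hac : a < c := by simp only [c]; linarith
  have hcb : c < b := by simp only [c]; linarith
  have hint : IntegrableOn f' (uIcc a c) := by
    rw [uIcc_of_le hac.le, integrableOn_Icc_iff_integrableOn_Ioo]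
    exact hf'.mono_set (Ioo_subset_Ioo_right hcb.le)
  have hprim : Tendsto (fun x => ∫ y in x..c, f' y) (𝓝[>] a) (𝓝 (∫ y in a..c, f' y)) := by
    have h := (intervalIntegral.continuousOn_primitive_interval_left hint) a left_mem_uIcc
    rw [uIcc_of_le hac.le] at h
    simpa only [nhdsWithin_Ioo_eq_nhdsGT hac] using (h.mono Ioo_subset_Icc_self).tendsto
  refine ⟨f c - ∫ y in a..c, f' y, (tendsto_const_nhds.sub hprim).congr' ?_⟩
  filter_upwards [Ioo_mem_nhdsGT hac] with x hx
  have hsub : uIcc x c ⊆ Ioo a b := by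
    rw [uIcc_of_le hx.2.le]
    exact Icc_subset_Ioo hx.1 hcb
  rw [intervalIntegral.integral_eq_sub_of_hasDerivAt (fun y hy => hf y (hsub hy))
    (hf'.mono_set hsub).intervalIntegrable]
  ring

/-- The vortex equation reads `(r u')' = vortexForce α n κ u r`. -/
noncomputable def vortexForce (α : ℝ) (n : ℤ) (κ : ℝ) (u : ℝ → ℝ) (r : ℝ) : ℝ :=
  ((n : ℝ) ^ 2 / r) * u r - 2 * r * u r ^ 3 / (1 + α * u r ^ 2) + 2 * κ * r * u r

lemma mul_vortexForce (α : ℝ) (n : ℤ) (κ : ℝ) (u : ℝ → ℝ) (r : ℝ) :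
    u r * vortexForce α n κ u r = ((n : ℝ) ^ 2 / r) * u r ^ 2 + 2 * κ * r * u r ^ 2
      - 2 * r * u r ^ 4 / (1 + α * u r ^ 2) := by
  unfold vortexForce
  ring

lemma one_add_mul_sq_pos {α : ℝ} (hα : 0 ≤ α) (x : ℝ) : 0 < 1 + α * x ^ 2 := by
  positivity

lemma FiniteEnergy.integrableOn_kinetic_add_potential {α R : ℝ} {u : ℝ → ℝ} (hα : 0 ≤ α)
    (hu : ContinuousOn u (Ioo 0 R)) (hE : FiniteEnergy α R u) :
    IntegrableOn (fun r => r * deriv u r ^ 2 + u r ^ 2 / r) (Ioo 0 R) := by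
  have hmeas : AEStronglyMeasurable u (volume.restrict (Ioo 0 R)) :=
    hu.aestronglyMeasurable measurableSet_Ioo
  refine hE.of_add_of_nonneg measurableSet_Ioo ?_ (fun r hr => ?_) (fun r hr => ?_)
  · exact ((measurable_id.mul ((measurable_deriv u).pow_const 2)).aestronglyMeasurable).add
      ((hmeas.aemeasurable.pow_const 2).div aemeasurable_id).aestronglyMeasurable
  · exact add_nonneg (mul_nonneg hr.1.le (sq_nonneg _)) (div_nonneg (sq_nonneg _) hr.1.le)
  · exact mul_nonneg hr.1.le
      (Real.log_nonneg (le_add_of_nonneg_right (mul_nonneg hα (sq_nonneg _))))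

namespace IsVortexSol

variable {α κ R : ℝ} {n : ℤ} {u : ℝ → ℝ}

lemma deriv_mul_deriv (hu : IsVortexSol α n κ R u) {r : ℝ} (hr : r ∈ Ioo 0 R) :
    deriv (fun s => s * deriv u s) r = vortexForce α n κ u r := by
  have h := hu.2.2.2.2 r hr
  unfold vortexForce
  linarith

lemma hasDerivAt_flux (hu : IsVortexSol α n κ R u) {r : ℝ} (hr : r ∈ Ioo 0 R) :
    HasDerivAt (fun s => s * deriv u s * u s)
      (r * deriv u r ^ 2 + u r * vortexForce α n κ u r) r := by
  obtain ⟨hu', hu''⟩ := hu.2.1 r hr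
  have hw : HasDerivAt (fun s => s * deriv u s) (vortexForce α n κ u r) r := by
    rw [← hu.deriv_mul_deriv hr]
    exact (differentiableAt_id.mul hu'').hasDerivAt
  exact (hw.mul hu'.hasDerivAt).congr_deriv (by ring)

lemma continuousOn_vortexForce (hα : 0 ≤ α) (hu : IsVortexSol α n κ R u) {a : ℝ} (ha : 0 < a) :
    ContinuousOn (vortexForce α n κ u) (Icc a R) := by
  have hu' : ContinuousOn u (Icc a R) := hu.1.mono (Icc_subset_Icc_left ha.le)
  refine ((continuousOn_const.div continuousOn_id fun r hr => (ha.trans_le hr.1).ne').mul hu').sub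
    ((((continuousOn_const.mul continuousOn_id).mul (hu'.pow 3)).div
      (continuousOn_const.add (continuousOn_const.mul (hu'.pow 2))) fun r _ => ?_)) |>.add
    ((continuousOn_const.mul continuousOn_id).mul hu')
  exact (one_add_mul_sq_pos hα (u r)).ne'

lemma isBoundedUnder_mul_deriv (hα : 0 ≤ α) (hR : 0 < R) (hu : IsVortexSol α n κ R u) :
    IsBoundedUnder (· ≤ ·) (𝓝[<] R) (norm ∘ fun r => r * deriv u r) := by
  set w := fun r => r * deriv u r
  have hR2 : 0 < R / 2 := half_pos hR
  obtain ⟨M, hM⟩ := isCompact_Icc.exists_bound_of_continuousOn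
    (hu.continuousOn_vortexForce hα hR2)
  have hsub : Ico (R / 2) R ⊆ Ioo 0 R := fun r hr => ⟨hR2.trans_le hr.1, hr.2⟩
  have hmem : R / 2 ∈ Ico (R / 2) R := ⟨le_rfl, half_lt_self hR⟩
  refine isBoundedUnder_of_eventually_le (a := ‖w (R / 2)‖ + M * R) ?_
  filter_upwards [Ico_mem_nhdsLT (half_lt_self hR)] with t ht
  have hlip := (convex_Ico (R / 2) R).norm_image_sub_le_of_norm_deriv_le
    (fun r hr => differentiableAt_id.mul (hu.2.1 r (hsub hr)).2)
    (fun r hr => (hu.deriv_mul_deriv (hsub hr)).symm ▸ hM r (Ico_subset_Icc_self hr)) hmem ht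
  have hM0 : 0 ≤ M := (norm_nonneg _).trans (hM _ (Ico_subset_Icc_self hmem))
  have hdist : ‖t - R / 2‖ ≤ R := by
    rw [Real.norm_eq_abs, abs_of_nonneg (sub_nonneg.2 ht.1)]
    linarith [ht.2]
  calc ‖w t‖ ≤ ‖w (R / 2)‖ + ‖w t - w (R / 2)‖ := norm_le_insert' _ _
    _ ≤ ‖w (R / 2)‖ + M * R := by gcongr; exact hlip.trans (by gcongr)

lemma tendsto_flux_nhdsLT (hα : 0 ≤ α) (hR : 0 < R) (hu : IsVortexSol α n κ R u) :
    Tendsto (fun r => r * deriv u r * u r) (𝓝[<] R) (𝓝 0) := by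
  have hlim : Tendsto u (𝓝[<] R) (𝓝 0) := by
    have h := (hu.1 R (right_mem_Icc.2 hR.le)).mono Ioo_subset_Icc_self
    rw [ContinuousWithinAt, nhdsWithin_Ioo_eq_nhdsLT hR, hu.2.2.2.1] at h
    exact h
  exact isBoundedUnder_le_mul_tendsto_zero (hu.isBoundedUnder_mul_deriv hα hR) hlim

lemma tendsto_flux_nhdsGT (hR : 0 < R) (hu : IsVortexSol α n κ R u)
    (hg : IntegrableOn (fun r => r * deriv u r ^ 2 + u r ^ 2 / r) (Ioo 0 R))
    (hH : IntegrableOn (fun r => r * deriv u r ^ 2 + u r * vortexForce α n κ u r) (Ioo 0 R)) :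
    Tendsto (fun r => r * deriv u r * u r) (𝓝[>] 0) (𝓝 0) := by
  obtain ⟨L, hL⟩ := exists_tendsto_nhdsGT_of_hasDerivAt hR (fun r hr => hu.hasDerivAt_flux hr) hH
  suffices L = 0 by rwa [this] at hL
  by_contra hL0
  have hpos : 0 < |L| / 2 := half_pos (abs_pos.2 hL0)
  have hfar : ∀ᶠ r in 𝓝[>] 0, |L| / 2 < |r * deriv u r * u r| :=
    hL.abs.eventually (lt_mem_nhds (half_lt_self (abs_pos.2 hL0)))
  obtain ⟨r, hsmall, hbig, hr⟩ := ((frequently_sub_mul_lt_of_integrableOn hR hg hpos).and_eventually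
    (hfar.and self_mem_nhdsWithin)).exists
  have hbound : |r * deriv u r * u r| ≤ (r - 0) * (r * deriv u r ^ 2 + u r ^ 2 / r) := by
    rw [sub_zero, mul_add, mul_div_cancel₀ _ (ne_of_gt hr), abs_le]
    constructor <;> nlinarith [sq_nonneg (r * deriv u r - u r), sq_nonneg (r * deriv u r + u r)]
  linarith

lemma integral_deriv_flux_eq_zero (hα : 0 ≤ α) (hR : 0 < R) (hu : IsVortexSol α n κ R u)
    (hg : IntegrableOn (fun r => r * deriv u r ^ 2 + u r ^ 2 / r) (Ioo 0 R))
    (hH : IntegrableOn (fun r => r * deriv u r ^ 2 + u r * vortexForce α n κ u r) (Ioo 0 R)) :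
    ∫ r in Ioo 0 R, (r * deriv u r ^ 2 + u r * vortexForce α n κ u r) = 0 := by
  rw [← integral_Ioc_eq_integral_Ioo, ← intervalIntegral.integral_of_le hR.le,
    intervalIntegral.integral_eq_sub_of_hasDerivAt_of_tendsto hR
      (fun r hr => hu.hasDerivAt_flux hr)
      ((intervalIntegrable_iff_integrableOn_Ioo_of_le hR.le).2 hH)
      (hu.tendsto_flux_nhdsGT hR hg hH) (hu.tendsto_flux_nhdsLT hα hR), sub_self]

end IsVortexSol

theorem stmt2_general (α : ℝ) (hα : 0 < α) (n : ℤ) (κ R : ℝ) (hR : 0 < R)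
    (u : ℝ → ℝ) (hu : IsVortexSol α n κ R u) (hE : FiniteEnergy α R u) :
    IntegrableOn (fun r => r * (deriv u r) ^ 2) (Ioo 0 R) ∧
    IntegrableOn (fun r => ((n : ℝ) ^ 2 / r) * (u r) ^ 2) (Ioo 0 R) ∧
    IntegrableOn (fun r => r * (u r) ^ 2) (Ioo 0 R) ∧
    IntegrableOn (fun r => r * (u r) ^ 4 / (1 + α * (u r) ^ 2)) (Ioo 0 R) ∧
    -(∫ r in Ioo (0 : ℝ) R, r * (deriv u r) ^ 2)
      = ∫ r in Ioo (0 : ℝ) R,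
          (((n : ℝ) ^ 2 / r) * (u r) ^ 2 + 2 * κ * r * (u r) ^ 2
            - 2 * r * (u r) ^ 4 / (1 + α * (u r) ^ 2)) := by
  have hcont : ContinuousOn u (Icc 0 R) := hu.1
  have hg := hE.integrableOn_kinetic_add_potential hα.le (hcont.mono Ioo_subset_Icc_self)
  have h1 := hg.of_add_of_nonneg measurableSet_Ioo
    (measurable_id.mul ((measurable_deriv u).pow_const 2)).aestronglyMeasurable
    (fun r hr => mul_nonneg hr.1.le (sq_nonneg _)) (fun r hr => div_nonneg (sq_nonneg _) hr.1.le)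
  have h2 : IntegrableOn (fun r => ((n : ℝ) ^ 2 / r) * u r ^ 2) (Ioo 0 R) :=
    ((hg.sub h1).const_mul ((n : ℝ) ^ 2)).congr
      (ae_of_all _ fun r => by simp only [Pi.sub_apply]; ring)
  have h3 : IntegrableOn (fun r => r * u r ^ 2) (Ioo 0 R) :=
    (continuousOn_id.mul (hcont.pow 2)).integrableOn_Icc.mono_set Ioo_subset_Icc_self
  have h4 : IntegrableOn (fun r => r * u r ^ 4 / (1 + α * u r ^ 2)) (Ioo 0 R) :=
    ((continuousOn_id.mul (hcont.pow 4)).div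
      (continuousOn_const.add (continuousOn_const.mul (hcont.pow 2)))
      fun r _ => (one_add_mul_sq_pos hα.le (u r)).ne').integrableOn_Icc.mono_set Ioo_subset_Icc_self
  have hG : IntegrableOn (fun r => u r * vortexForce α n κ u r) (Ioo 0 R) := by
    simp only [mul_vortexForce]
    exact (h2.add (h3.const_mul (2 * κ))).sub (h4.const_mul 2) |>.congr
      (ae_of_all _ fun r => by simp only [Pi.add_apply, Pi.sub_apply]; ring)
  refine ⟨h1, h2, h3, h4, ?_⟩
  have hzero := hu.integral_deriv_flux_eq_zero hα.le hR hg (h1.add hG)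
  rw [integral_add h1 hG] at hzero
  simp only [mul_vortexForce] at hzero
  linarith

/-- finiteness of the integrals and the Pohozaev-type identity. -/
theorem stmt2 (α : ℝ) (hα : 0 < α) (n : ℤ) (hn : 1 ≤ |n|) (κ R : ℝ) (hR : 0 < R)
    (u : ℝ → ℝ) (hu : IsVortexSol α n κ R u) (hE : FiniteEnergy α R u) :
    IntegrableOn (fun r => r * (deriv u r) ^ 2) (Ioo 0 R) ∧
    IntegrableOn (fun r => ((n : ℝ) ^ 2 / r) * (u r) ^ 2) (Ioo 0 R) ∧
    IntegrableOn (fun r => r * (u r) ^ 2) (Ioo 0 R) ∧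
    IntegrableOn (fun r => r * (u r) ^ 4 / (1 + α * (u r) ^ 2)) (Ioo 0 R) ∧
    -(∫ r in Ioo (0 : ℝ) R, r * (deriv u r) ^ 2)
      = ∫ r in Ioo (0 : ℝ) R,
          (((n : ℝ) ^ 2 / r) * (u r) ^ 2 + 2 * κ * r * (u r) ^ 2
            - 2 * r * (u r) ^ 4 / (1 + α * (u r) ^ 2)) :=
  stmt2_general α hα n κ R hR u hu hE
end

section
/- Let α > 0, let n be an integer with |n| ≥ 1, let κ < α⁻¹ and β > 0. If R > ( 12(1 + n²(2 ln 2 − 1)) / (α⁻¹ − κ) )^{1/2}, then there exists b > 0 such that the tent function u₀ with parameters a = R/2 and b satisfies ∫₀^R ( r u₀'(r)² + u₀(r)²/r ) dr = 4 b² ln 2 > β and I_κ(u₀) < 0. -/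
open MeasureTheory Set Filter

lemma tent_cont (a b : ℝ) : Continuous (tent a b) := by
  unfold tent
  apply Continuous.if_le (by fun_prop) (by fun_prop) continuous_id continuous_const
  intro x hx; simp only [id_eq] at hx; subst hx; ring

lemma deriv_tent_left {a b r : ℝ} (h : r < a) : deriv (tent a b) r = b / a := by
  have he : tent a b =ᶠ[nhds r] fun s => (b / a) * s := by
    filter_upwards [Iio_mem_nhds h] with s hs
    simp [tent, le_of_lt (mem_Iio.mp hs)]
  rw [he.deriv_eq]
  simpa using ((hasDerivAt_id r).const_mul (b / a)).deriv

lemma deriv_tent_right {a b r : ℝ} (h : a < r) : deriv (tent a b) r = -(b / a) := by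
  have he : tent a b =ᶠ[nhds r] fun s => (b / a) * (2 * a - s) := by
    filter_upwards [Ioi_mem_nhds h] with s hs
    simp [tent, not_le.mpr (mem_Ioi.mp hs)]
  rw [he.deriv_eq]
  simpa using (((hasDerivAt_id r).const_sub (2 * a)).const_mul (b / a)).deriv

lemma integral_Ioo_eq (f : ℝ → ℝ) {l m : ℝ} (h : l ≤ m) :
    ∫ x in Ioo l m, f x = ∫ x in l..m, f x := by
  rw [intervalIntegral.integral_of_le h, MeasureTheory.integral_Ioc_eq_integral_Ioo]

lemma split_key (f g₁ g₂ : ℝ → ℝ) {a R : ℝ} (ha : 0 < a) (haR : a < R)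
    (hg₁ : ContinuousOn g₁ (Icc 0 a)) (hg₂ : ContinuousOn g₂ (Icc a R))
    (h₁ : EqOn f g₁ (Ioo 0 a)) (h₂ : EqOn f g₂ (Ioo a R)) :
    IntegrableOn f (Ioo 0 R) ∧
      ∫ x in Ioo (0:ℝ) R, f x = (∫ x in (0:ℝ)..a, g₁ x) + ∫ x in a..R, g₂ x := by
  have hdisj : Disjoint (Ioo (0:ℝ) a) (Ico a R) :=
    Set.disjoint_left.mpr fun x hx hx' => absurd hx.2 (not_lt.mpr hx'.1)
  have hunion : Ioo (0:ℝ) a ∪ Ico a R = Ioo 0 R := Set.Ioo_union_Ico_eq_Ioo ha haR.le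
  have hi₁ : IntegrableOn f (Ioo 0 a) := by
    have : IntegrableOn g₁ (Ioo 0 a) :=
      (hg₁.integrableOn_Icc).mono_set Ioo_subset_Icc_self
    exact this.congr_fun (fun x hx => (h₁ hx).symm) measurableSet_Ioo
  have hi₂o : IntegrableOn f (Ioo a R) := by
    have : IntegrableOn g₂ (Ioo a R) :=
      (hg₂.integrableOn_Icc).mono_set Ioo_subset_Icc_self
    exact this.congr_fun (fun x hx => (h₂ hx).symm) measurableSet_Ioo
  have hi₂ : IntegrableOn f (Ico a R) :=
    hi₂o.congr_set_ae (MeasureTheory.Ioo_ae_eq_Ico).symm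
  constructor
  · rw [← hunion]; exact hi₁.union hi₂
  · rw [← hunion, MeasureTheory.setIntegral_union hdisj measurableSet_Ico hi₁ hi₂,
      MeasureTheory.integral_Ico_eq_integral_Ioo,
      MeasureTheory.setIntegral_congr_fun measurableSet_Ioo h₁,
      MeasureTheory.setIntegral_congr_fun measurableSet_Ioo h₂,
      integral_Ioo_eq _ ha.le, integral_Ioo_eq _ haR.le]

lemma int_poly (c₀ c₁ c₂ c₃ l m : ℝ) :
    ∫ r in l..m, (c₀ + c₁ * r + c₂ * r ^ 2 + c₃ * r ^ 3)
      = c₀ * (m - l) + c₁ * (m ^ 2 - l ^ 2) / 2 + c₂ * (m ^ 3 - l ^ 3) / 3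
        + c₃ * (m ^ 4 - l ^ 4) / 4 := by
  have h : ∀ x ∈ uIcc l m, HasDerivAt
      (fun r => c₀ * r + c₁ * r ^ 2 / 2 + c₂ * r ^ 3 / 3 + c₃ * r ^ 4 / 4)
      (c₀ + c₁ * x + c₂ * x ^ 2 + c₃ * x ^ 3) x := by
    intro x _
    have h1 : HasDerivAt (fun r : ℝ => c₀ * r + c₁ * r ^ 2 / 2 + c₂ * r ^ 3 / 3 + c₃ * r ^ 4 / 4)
        (c₀ * 1 + c₁ * (2 * x ^ 1) / 2 + c₂ * (3 * x ^ 2) / 3 + c₃ * (4 * x ^ 3) / 4) x :=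
      ((((hasDerivAt_id x).const_mul c₀).add
        (((hasDerivAt_pow 2 x).const_mul c₁).div_const 2)).add
        (((hasDerivAt_pow 3 x).const_mul c₂).div_const 3)).add
        (((hasDerivAt_pow 4 x).const_mul c₃).div_const 4)
    convert h1 using 1; ring
  rw [intervalIntegral.integral_eq_sub_of_hasDerivAt h
    (by apply Continuous.intervalIntegrable; fun_prop)]
  ring

lemma int_poly_div (c₀ c₁ c₂ c₃ cm : ℝ) {l m : ℝ} (hl : 0 < l) (hlm : l ≤ m) :
    ∫ r in l..m, (c₀ + c₁ * r + c₂ * r ^ 2 + c₃ * r ^ 3 + cm / r)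
      = c₀ * (m - l) + c₁ * (m ^ 2 - l ^ 2) / 2 + c₂ * (m ^ 3 - l ^ 3) / 3
        + c₃ * (m ^ 4 - l ^ 4) / 4 + cm * Real.log (m / l) := by
  have huIcc : uIcc l m = Icc l m := uIcc_of_le hlm
  have h : ∀ x ∈ uIcc l m, HasDerivAt
      (fun r => c₀ * r + c₁ * r ^ 2 / 2 + c₂ * r ^ 3 / 3 + c₃ * r ^ 4 / 4 + cm * Real.log r)
      (c₀ + c₁ * x + c₂ * x ^ 2 + c₃ * x ^ 3 + cm / x) x := by
    intro x hx
    rw [huIcc] at hx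
    have hx0 : x ≠ 0 := (lt_of_lt_of_le hl hx.1).ne'
    have h1 : HasDerivAt (fun r : ℝ => c₀ * r + c₁ * r ^ 2 / 2 + c₂ * r ^ 3 / 3 + c₃ * r ^ 4 / 4
        + cm * Real.log r)
        (c₀ * 1 + c₁ * (2 * x ^ 1) / 2 + c₂ * (3 * x ^ 2) / 3 + c₃ * (4 * x ^ 3) / 4
          + cm * x⁻¹) x :=
      (((((hasDerivAt_id x).const_mul c₀).add
        (((hasDerivAt_pow 2 x).const_mul c₁).div_const 2)).add
        (((hasDerivAt_pow 3 x).const_mul c₂).div_const 3)).add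
        (((hasDerivAt_pow 4 x).const_mul c₃).div_const 4)).add
        ((Real.hasDerivAt_log hx0).const_mul cm)
    convert h1 using 1; field_simp
  have hint : IntervalIntegrable
      (fun x => c₀ + c₁ * x + c₂ * x ^ 2 + c₃ * x ^ 3 + cm / x) volume l m := by
    apply ContinuousOn.intervalIntegrable
    rw [huIcc]
    apply ContinuousOn.add (by fun_prop)
    exact continuousOn_const.div continuousOn_id
      (fun x hx => (lt_of_lt_of_le hl hx.1).ne')
  rw [intervalIntegral.integral_eq_sub_of_hasDerivAt h hint,
    Real.log_div (lt_of_lt_of_le hl hlm).ne' hl.ne']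
  ring



set_option maxHeartbeats 2000000 in
/-- the action functional `I_κ` is indefinite for large `R`. -/
theorem stmt3 (α : ℝ) (hα : 0 < α) (n : ℤ) (hn : 1 ≤ |n|) (κ : ℝ) (hκ : κ < α⁻¹)
    (β : ℝ) (hβ : 0 < β) (R : ℝ)
    (hR : R > Real.sqrt (12 * (1 + (n : ℝ) ^ 2 * (2 * Real.log 2 - 1)) / (α⁻¹ - κ))) :
    ∃ b > (0 : ℝ),
      (∫ r in Ioo (0 : ℝ) R,
          (r * (deriv (tent (R / 2) b) r) ^ 2 + (tent (R / 2) b r) ^ 2 / r))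
        = 4 * b ^ 2 * Real.log 2 ∧
      4 * b ^ 2 * Real.log 2 > β ∧
      actI α n κ R (tent (R / 2) b) < 0 := by
  have hlog2 : (0:ℝ) < Real.log 2 := Real.log_pos one_lt_two
  have h2log2 : (1:ℝ) < 2 * Real.log 2 := by nlinarith [Real.log_two_gt_d9]
  have hn2 : (1:ℝ) ≤ (n:ℝ)^2 := by
    have h1 : (1:ℤ) ≤ |n| := hn
    have h2 : (1:ℝ) ≤ |(n:ℝ)| := by
      rw [← Int.cast_abs]; exact_mod_cast h1
    nlinarith [sq_abs (n:ℝ)]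
  obtain ⟨M, hM_def⟩ : ∃ x : ℝ, x = 1 + (n:ℝ)^2 * (2*Real.log 2 - 1) := ⟨_, rfl⟩
  rw [← hM_def] at hR
  have hM : 0 < M := by rw [hM_def]; nlinarith
  have hτ : 0 < α⁻¹ - κ := sub_pos.mpr hκ
  have hR0 : 0 < R := lt_of_le_of_lt (Real.sqrt_nonneg _) hR
  have hR2 : 12 * M / (α⁻¹ - κ) < R ^ 2 := (Real.sqrt_lt' hR0).mp hR
  have hRM : 12 * M < (α⁻¹ - κ) * R ^ 2 := by
    rw [div_lt_iff₀ hτ] at hR2; nlinarith [hR2]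
  obtain ⟨a, ha_def⟩ : ∃ x : ℝ, x = R / 2 := ⟨_, rfl⟩
  rw [← ha_def]
  have ha : 0 < a := by rw [ha_def]; linarith
  have haR : a < R := by rw [ha_def]; linarith
  have hR2a : R = 2 * a := by rw [ha_def]; ring
  have hRa2 : R / a = 2 := by rw [ha_def]; field_simp
  obtain ⟨ε, hε_def⟩ : ∃ x : ℝ, x = (α⁻¹ - κ) * R^2 / 3 - 2*M := ⟨_, rfl⟩
  have hε : 2*M < ε := by rw [hε_def]; nlinarith
  have hε0 : 0 < ε := by nlinarith
  obtain ⟨C, hC_def⟩ : ∃ x : ℝ, x = 4 * (α^2)⁻¹ * a^2 := ⟨_, rfl⟩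
  have hC0 : 0 < C := by rw [hC_def]; positivity
  obtain ⟨sα, hsα_def⟩ : ∃ x : ℝ, x = Real.sqrt α := ⟨_, rfl⟩
  have hsα0 : 0 ≤ sα := hsα_def ▸ Real.sqrt_nonneg α
  obtain ⟨b, hb_def⟩ : ∃ x : ℝ, x = 1 + 2*C*(1+sα)/ε + Real.sqrt (β/(4*Real.log 2)) :=
    ⟨_, rfl⟩
  have hsq0 : (0:ℝ) ≤ Real.sqrt (β/(4*Real.log 2)) := Real.sqrt_nonneg _
  have hq0 : (0:ℝ) ≤ 2*C*(1+sα)/ε := by positivity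
  have hb1 : 1 ≤ b := by rw [hb_def]; linarith
  have hb0 : 0 < b := lt_of_lt_of_le one_pos hb1
  refine ⟨b, hb0, ?_, ?_, ?_⟩
  · -- energy integral = 4 b² log 2
    have key := split_key
      (fun r => r * (deriv (tent a b) r) ^ 2 + (tent a b r) ^ 2 / r)
      (fun r => 0 + (2*(b/a)^2) * r + 0 * r^2 + 0 * r^3)
      (fun r => (-4*a*(b/a)^2) + (2*(b/a)^2) * r + 0 * r^2 + 0 * r^3 + (4*a^2*(b/a)^2) / r)
      ha haR (by fun_prop)
      (by
        apply ContinuousOn.add (by fun_prop)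
        exact continuousOn_const.div continuousOn_id
          (fun x hx => (lt_of_lt_of_le ha hx.1).ne'))
      (by
        intro r hr
        dsimp only
        have hr0 : r ≠ 0 := hr.1.ne'
        rw [deriv_tent_left hr.2]
        have ht : tent a b r = (b/a) * r := by simp [tent, hr.2.le]
        rw [ht]
        field_simp; ring)
      (by
        intro r hr
        dsimp only
        have hr0 : r ≠ 0 := (lt_trans ha hr.1).ne'
        rw [deriv_tent_right hr.1]
        have ht : tent a b r = (b/a) * (2*a - r) := by simp [tent, not_le.mpr hr.1]
        rw [ht]
        field_simp; ring)
    rw [key.2, int_poly, int_poly_div _ _ _ _ _ ha haR.le, hRa2, hR2a]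
    field_simp
    ring
  · -- 4 b² log 2 > β
    have hs_lt : Real.sqrt (β/(4*Real.log 2)) < b := by rw [hb_def]; linarith
    have h1 : β/(4*Real.log 2) < b^2 := (Real.sqrt_lt' hb0).mp hs_lt
    rw [div_lt_iff₀ (by positivity)] at h1
    linarith only [h1]
  · -- actI < 0
    obtain ⟨L, hL_def⟩ : ∃ x : ℝ, x = Real.log (1 + α*b^2) := ⟨_, rfl⟩
    have hLpos : (0:ℝ) < 1 + α*b^2 := by positivity
    have hL : L ≤ 2 + 2*sα*b := by
      have hsq : Real.sqrt (1+α*b^2) ≤ 1 + sα*b := by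
        rw [show (1:ℝ)+sα*b = Real.sqrt ((1+sα*b)^2) from
          (Real.sqrt_sq (by positivity)).symm]
        apply Real.sqrt_le_sqrt
        rw [hsα_def]
        nlinarith [Real.sq_sqrt hα.le, Real.sqrt_nonneg α, hb0]
      have h2 : Real.log (Real.sqrt (1+α*b^2)) ≤ Real.sqrt (1+α*b^2) - 1 :=
        Real.log_le_sub_one_of_pos (Real.sqrt_pos.mpr hLpos)
      have h3 : L = 2 * Real.log (Real.sqrt (1+α*b^2)) := by
        rw [hL_def, Real.log_sqrt hLpos.le]; ring
      nlinarith
    -- the dominating integrand Ĝ and the actual integrand G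
    have keyGhat := split_key
      (fun r => r * (deriv (tent a b) r) ^ 2 + ((n:ℝ)^2 / r) * (tent a b r) ^ 2
        - 2 * (α⁻¹ - κ) * r * (tent a b r) ^ 2 + (2*(α^2)⁻¹*L) * r)
      (fun r => 0 + ((b/a)^2 + (n:ℝ)^2*(b/a)^2 + 2*(α^2)⁻¹*L) * r + 0 * r^2
        + (-(2*(α⁻¹-κ)*(b/a)^2)) * r^3)
      (fun r => (-(4*a*(n:ℝ)^2*(b/a)^2))
        + ((b/a)^2 + (n:ℝ)^2*(b/a)^2 + 2*(α^2)⁻¹*L - 8*(α⁻¹-κ)*(b/a)^2*a^2) * r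
        + (8*(α⁻¹-κ)*(b/a)^2*a) * r^2 + (-(2*(α⁻¹-κ)*(b/a)^2)) * r^3
        + (4*a^2*(n:ℝ)^2*(b/a)^2) / r)
      ha haR (by fun_prop)
      (by
        apply ContinuousOn.add (by fun_prop)
        exact continuousOn_const.div continuousOn_id
          (fun x hx => (lt_of_lt_of_le ha hx.1).ne'))
      (by
        intro r hr
        dsimp only
        have hr0 : r ≠ 0 := hr.1.ne'
        rw [deriv_tent_left hr.2]
        have ht : tent a b r = (b/a) * r := by simp [tent, hr.2.le]
        rw [ht]
        field_simp; ring)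
      (by
        intro r hr
        dsimp only
        have hr0 : r ≠ 0 := (lt_trans ha hr.1).ne'
        rw [deriv_tent_right hr.1]
        have ht : tent a b r = (b/a) * (2*a - r) := by simp [tent, not_le.mpr hr.1]
        rw [ht]
        field_simp; ring)
    have keyG := split_key
      (fun r => r * (deriv (tent a b) r) ^ 2 + ((n:ℝ)^2 / r) * (tent a b r) ^ 2
        - 2 * (α⁻¹ - κ) * r * (tent a b r) ^ 2
        + 2 * (α^2)⁻¹ * r * Real.log (1 + α * (tent a b r) ^ 2))
      (fun r => (b/a)^2 * r + (n:ℝ)^2 * (b/a)^2 * r - 2*(α⁻¹-κ)*(b/a)^2*r^3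
        + 2*(α^2)⁻¹ * r * Real.log (1 + α * ((b/a)*r)^2))
      (fun r => (b/a)^2 * r + (n:ℝ)^2 * ((b/a)*(2*a-r))^2 / r
        - 2*(α⁻¹-κ)*r*((b/a)*(2*a-r))^2
        + 2*(α^2)⁻¹ * r * Real.log (1 + α * ((b/a)*(2*a-r))^2))
      ha haR
      (by
        apply ContinuousOn.add (by fun_prop)
        apply Continuous.continuousOn
        apply Continuous.mul (by fun_prop)
        apply Continuous.log (by fun_prop)
        intro x
        positivity)
      (by
        apply ContinuousOn.add
        · apply ContinuousOn.sub
          · apply ContinuousOn.add (by fun_prop)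
            exact (continuousOn_const.mul (by fun_prop)).div continuousOn_id
              (fun x hx => (lt_of_lt_of_le ha hx.1).ne')
          · fun_prop
        · apply ContinuousOn.mul (by fun_prop)
          apply ContinuousOn.log (by fun_prop)
          intro x hx; positivity)
      (by
        intro r hr
        dsimp only
        have hr0 : r ≠ 0 := hr.1.ne'
        rw [deriv_tent_left hr.2]
        have ht : tent a b r = (b/a) * r := by simp [tent, hr.2.le]
        rw [ht]
        field_simp)
      (by
        intro r hr
        dsimp only
        have hr0 : r ≠ 0 := (lt_trans ha hr.1).ne'
        rw [deriv_tent_right hr.1]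
        have ht : tent a b r = (b/a) * (2*a - r) := by simp [tent, not_le.mpr hr.1]
        rw [ht]
        field_simp)
    -- value of the dominating integral
    have hGhat_val : (∫ r in Ioo (0:ℝ) R,
        (r * (deriv (tent a b) r) ^ 2 + ((n:ℝ)^2 / r) * (tent a b r) ^ 2
          - 2 * (α⁻¹ - κ) * r * (tent a b r) ^ 2 + (2*(α^2)⁻¹*L) * r))
        = -(ε*b^2) + C*L := by
      rw [keyGhat.2, int_poly, int_poly_div _ _ _ _ _ ha haR.le, hε_def, hC_def,
        hM_def, hRa2, hR2a]
      field_simp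
      ring
    -- pointwise comparison
    have hmono : ∀ x ∈ Ioo (0:ℝ) R,
        (x * (deriv (tent a b) x) ^ 2 + ((n:ℝ)^2 / x) * (tent a b x) ^ 2
          - 2 * (α⁻¹ - κ) * x * (tent a b x) ^ 2
          + 2 * (α^2)⁻¹ * x * Real.log (1 + α * (tent a b x) ^ 2))
        ≤ (x * (deriv (tent a b) x) ^ 2 + ((n:ℝ)^2 / x) * (tent a b x) ^ 2
          - 2 * (α⁻¹ - κ) * x * (tent a b x) ^ 2 + (2*(α^2)⁻¹*L) * x) := by
      intro x hx
      have htb : (tent a b x)^2 ≤ b^2 := by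
        have hx0 : 0 < x := hx.1
        have hxR : x < R := hx.2
        by_cases hxa : x ≤ a
        · have ht : tent a b x = (b/a) * x := by simp [tent, hxa]
          rw [ht]
          have h1 : 0 ≤ (b/a) * x := mul_nonneg (div_nonneg hb0.le ha.le) hx0.le
          have h2 : (b/a) * x ≤ b := by
            rw [div_mul_eq_mul_div, div_le_iff₀ ha]
            linarith only [mul_le_mul_of_nonneg_left hxa hb0.le]
          exact pow_le_pow_left₀ h1 h2 2
        · have ht : tent a b x = (b/a) * (2*a - x) := by simp [tent, hxa]
          rw [ht]
          push_neg at hxa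
          have h2ax : 0 < 2*a - x := by rw [hR2a] at hxR; linarith
          have h1 : 0 ≤ (b/a) * (2*a - x) := mul_nonneg (div_nonneg hb0.le ha.le) h2ax.le
          have h2 : (b/a) * (2*a - x) ≤ b := by
            rw [div_mul_eq_mul_div, div_le_iff₀ ha]
            have h6 : 2*a - x ≤ a := by linarith
            linarith only [mul_le_mul_of_nonneg_left h6 hb0.le]
          exact pow_le_pow_left₀ h1 h2 2
      have hlog : Real.log (1 + α * (tent a b x) ^ 2) ≤ L := by
        rw [hL_def]
        apply Real.log_le_log (by positivity)
        have h7 := mul_le_mul_of_nonneg_left htb hα.le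
        linarith only [h7]
      have hfac : 0 ≤ 2 * (α^2)⁻¹ * x := mul_nonneg (by positivity) hx.1.le
      have h8 := mul_le_mul_of_nonneg_left hlog hfac
      linarith only [h8]
    have hle := MeasureTheory.setIntegral_mono_on keyG.1 keyGhat.1 measurableSet_Ioo hmono
    rw [hGhat_val] at hle
    -- final negativity
    have hbt : 2*C*(1+sα)/ε + 1 ≤ b := by rw [hb_def]; linarith
    have hεb : 2*C*(1+sα) < ε*b := by
      have h4 := mul_le_mul_of_nonneg_left hbt hε0.le
      have h5 : ε*(2*C*(1+sα)/ε+1) = 2*C*(1+sα) + ε := by field_simp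
      rw [h5] at h4
      linarith only [h4, hε0]
    have hneg : -(ε*b^2) + C*L < 0 := by
      have A := mul_lt_mul_of_pos_right hεb hb0
      have B := mul_le_mul_of_nonneg_left hL hC0.le
      have D := mul_le_mul_of_nonneg_left hb1 hC0.le
      linarith only [A, B, D, hC0, hb1, hb0, hsα0]
    show (1 / 2 : ℝ) * ∫ r in Ioo (0 : ℝ) R,
      (r * (deriv (tent a b) r) ^ 2 + ((n:ℝ)^2 / r) * (tent a b r) ^ 2
        - 2 * (α⁻¹ - κ) * r * (tent a b r) ^ 2
        + 2 * (α^2)⁻¹ * r * Real.log (1 + α * (tent a b r) ^ 2)) < 0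
    linarith only [hle, hneg]
end

section
/- Let u be a classical solution of the n-vortex equation with finite energy which is not identically zero, and set Q₀ = Q(u). If |n| ≥ Q₀/π, then κ < 0. -/
/-!
Multiplying the vortex equation by `u` and integrating over `[a, b] ⊆ (0, R)` gives
`∫ₐᵇ (r u'² + n² u² / r) = [r u' u]ₐᵇ + ∫ₐᵇ (2 r u⁴ / (1 + α u²) - 2 κ r u²)`.
By AM–GM the left side dominates `|n| |u(b)² - u(a)²|`, so splitting at a maximum point
`r₀` of `u²` bounds it below by `|n| (2 u(r₀)² - u(a)² - u(b)²)`. If `κ ≥ 0`, the last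
integral is at most `2 u(r₀)² ∫₀ᴿ r u²`. Since `u²` vanishes at both ends, there are `a`
arbitrarily close to `0` and `b` arbitrarily close to `R` with `u u' ≥ 0` at `a` and
`u u' ≤ 0` at `b`, so the boundary term is `≤ 0` while `u(a)²` and `u(b)²` are small.
Hence `|n| ≤ ∫₀ᴿ r u² = Q(u) / 2π`, contradicting `|n| ≥ Q(u) / π`.
-/

open MeasureTheory Set Filter

open Topology

theorem two_mul_abs_mul_le {x : ℝ} (hx : 0 < x) (m p q : ℝ) :
    2 * |m * p * q| ≤ x * q ^ 2 + m ^ 2 / x * p ^ 2 := by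
  have key : x * q ^ 2 + m ^ 2 / x * p ^ 2 - 2 * |m * p * q| = (x * |q| - |m| * |p|) ^ 2 / x := by
    field_simp
    simp only [abs_mul]
    ring_nf
    simp only [sq_abs]
  have : 0 ≤ (x * |q| - |m| * |p|) ^ 2 / x := by positivity
  linarith

theorem frequently_nhdsGT_nonneg_of_hasDerivAt {f f' : ℝ → ℝ} {c : ℝ}
    (hf : ContinuousWithinAt f (Ici c) c) (hderiv : ∀ᶠ x in 𝓝[>] c, HasDerivAt f (f' x) x)
    (hmin : ∀ᶠ x in 𝓝[>] c, f c ≤ f x) : ∃ᶠ x in 𝓝[>] c, 0 ≤ f' x := by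
  intro hneg
  obtain ⟨d, hcd, hsub⟩ := mem_nhdsGT_iff_exists_Ioo_subset.1 ((hderiv.and hmin).and hneg)
  obtain ⟨x, hcx, hxd⟩ := exists_between (mem_Ioi.1 hcd)
  have hcont : ContinuousOn f (Icc c x) := by
    intro y hy
    rcases hy.1.eq_or_lt with rfl | hcy
    · exact hf.mono Icc_subset_Ici_self
    · exact (hsub ⟨hcy, hy.2.trans_lt hxd⟩).1.1.continuousAt.continuousWithinAt
  obtain ⟨ξ, hξ, hslope⟩ := exists_hasDerivAt_eq_slope f f' hcx hcont
    fun y hy => (hsub ⟨hy.1, hy.2.trans hxd⟩).1.1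
  refine (hsub ⟨hξ.1, hξ.2.trans hxd⟩).2 ?_
  show 0 ≤ f' ξ
  rw [hslope]
  exact div_nonneg (sub_nonneg.2 (hsub ⟨hcx, hxd⟩).1.2) (sub_nonneg.2 hcx.le)

theorem frequently_nhdsLT_nonpos_of_hasDerivAt {f f' : ℝ → ℝ} {d : ℝ}
    (hf : ContinuousWithinAt f (Iic d) d) (hderiv : ∀ᶠ x in 𝓝[<] d, HasDerivAt f (f' x) x)
    (hmin : ∀ᶠ x in 𝓝[<] d, f d ≤ f x) : ∃ᶠ x in 𝓝[<] d, f' x ≤ 0 := by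
  intro hneg
  obtain ⟨c, hcd, hsub⟩ := mem_nhdsLT_iff_exists_Ioo_subset.1 ((hderiv.and hmin).and hneg)
  obtain ⟨x, hcx, hxd⟩ := exists_between (mem_Iio.1 hcd)
  have hcont : ContinuousOn f (Icc x d) := by
    intro y hy
    rcases hy.2.eq_or_lt with rfl | hyd
    · exact hf.mono Icc_subset_Iic_self
    · exact (hsub ⟨hcx.trans_le hy.1, hyd⟩).1.1.continuousAt.continuousWithinAt
  obtain ⟨ξ, hξ, hslope⟩ := exists_hasDerivAt_eq_slope f f' hxd hcont
    fun y hy => (hsub ⟨hcx.trans hy.1, hy.2⟩).1.1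
  refine (hsub ⟨hcx.trans hξ.1, hξ.2⟩).2 ?_
  show f' ξ ≤ 0
  rw [hslope]
  exact div_nonpos_of_nonpos_of_nonneg (sub_nonpos.2 (hsub ⟨hcx, hxd⟩).1.2)
    (sub_nonneg.2 hxd.le)

section BoundaryZero

variable {u : ℝ → ℝ} {c d ε : ℝ}

theorem exists_sq_lt_and_mul_deriv_nonneg_of_left_eq_zero (hcd : c < d) (hε : 0 < ε)
    (hc : u c = 0) (hcont : ContinuousOn u (Icc c d))
    (hdiff : ∀ x ∈ Ioo c d, DifferentiableAt ℝ u x) :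
    ∃ a ∈ Ioo c d, u a ^ 2 < ε ∧ 0 ≤ u a * deriv u a := by
  have hc' : ContinuousWithinAt (fun x => u x ^ 2) (Ici c) c :=
    ((hcont c ⟨le_rfl, hcd.le⟩).mono_of_mem_nhdsWithin (Icc_mem_nhdsGE hcd)).pow 2
  have hderiv : ∀ᶠ x in 𝓝[>] c, HasDerivAt (fun x => u x ^ 2) (2 * u x * deriv u x) x := by
    filter_upwards [Ioo_mem_nhdsGT hcd] with x hx
    simpa using (hdiff x hx).hasDerivAt.fun_pow 2
  have hsmall : ∀ᶠ x in 𝓝[>] c, u x ^ 2 < ε :=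
    (continuousWithinAt_Ioi_iff_Ici.2 hc').eventually (gt_mem_nhds (by simpa [hc] using hε))
  obtain ⟨a, ⟨hpos, hsq⟩, ha⟩ :=
    (((frequently_nhdsGT_nonneg_of_hasDerivAt hc' hderiv
      (Eventually.of_forall fun x => by simp [hc, sq_nonneg])).and_eventually hsmall).and_eventually
      (Ioo_mem_nhdsGT hcd)).exists
  exact ⟨a, ha, hsq, by linarith⟩

theorem exists_sq_lt_and_mul_deriv_nonpos_of_right_eq_zero (hcd : c < d) (hε : 0 < ε)
    (hd : u d = 0) (hcont : ContinuousOn u (Icc c d))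
    (hdiff : ∀ x ∈ Ioo c d, DifferentiableAt ℝ u x) :
    ∃ b ∈ Ioo c d, u b ^ 2 < ε ∧ u b * deriv u b ≤ 0 := by
  have hd' : ContinuousWithinAt (fun x => u x ^ 2) (Iic d) d :=
    ((hcont d ⟨hcd.le, le_rfl⟩).mono_of_mem_nhdsWithin (Icc_mem_nhdsLE hcd)).pow 2
  have hderiv : ∀ᶠ x in 𝓝[<] d, HasDerivAt (fun x => u x ^ 2) (2 * u x * deriv u x) x := by
    filter_upwards [Ioo_mem_nhdsLT hcd] with x hx
    simpa using (hdiff x hx).hasDerivAt.fun_pow 2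
  have hsmall : ∀ᶠ x in 𝓝[<] d, u x ^ 2 < ε :=
    (continuousWithinAt_Iio_iff_Iic.2 hd').eventually (gt_mem_nhds (by simpa [hd] using hε))
  obtain ⟨b, ⟨hneg, hsq⟩, hb⟩ :=
    (((frequently_nhdsLT_nonpos_of_hasDerivAt hd' hderiv
      (Eventually.of_forall fun x => by simp [hd, sq_nonneg])).and_eventually hsmall).and_eventually
      (Ioo_mem_nhdsLT hcd)).exists
  exact ⟨b, hb, hsq, by linarith⟩

end BoundaryZero

noncomputable def energyDensity (m : ℝ) (u : ℝ → ℝ) (x : ℝ) : ℝ :=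
  x * deriv u x ^ 2 + m ^ 2 / x * u x ^ 2

section RadialIdentities

variable {u : ℝ → ℝ} {a b : ℝ}

theorem continuousOn_energyDensity {s : Set ℝ} (m : ℝ) (hu : ContinuousOn u s)
    (hu' : ContinuousOn (deriv u) s) (hs : ∀ x ∈ s, x ≠ 0) :
    ContinuousOn (energyDensity m u) s :=
  (continuousOn_id.mul (hu'.pow 2)).add ((continuousOn_const.div continuousOn_id hs).mul (hu.pow 2))

theorem continuousOn_nonlinearity {s : Set ℝ} {α : ℝ} (hα : 0 ≤ α) (κ : ℝ)
    (hu : ContinuousOn u s) :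
    ContinuousOn (fun x => 2 * x * u x ^ 4 / (1 + α * u x ^ 2) - 2 * κ * x * u x ^ 2) s :=
  (((continuousOn_const.mul continuousOn_id).mul (hu.pow 4)).div
    (continuousOn_const.add (continuousOn_const.mul (hu.pow 2)))
      fun _ _ => (add_pos_of_pos_of_nonneg one_pos (mul_nonneg hα (sq_nonneg _))).ne').sub
    ((continuousOn_const.mul continuousOn_id).mul (hu.pow 2))

theorem abs_mul_abs_sq_sub_sq_le_integral (m : ℝ) (ha : 0 < a) (hab : a ≤ b)
    (hu : ∀ x ∈ Icc a b, DifferentiableAt ℝ u x) (hu' : ContinuousOn (deriv u) (Icc a b)) :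
    |m| * |u b ^ 2 - u a ^ 2| ≤ ∫ x in a..b, energyDensity m u x := by
  have hcont : ContinuousOn u (Icc a b) := fun x hx => (hu x hx).continuousAt.continuousWithinAt
  have hpos : ∀ x ∈ Icc a b, 0 < x := fun x hx => ha.trans_le hx.1
  have hftc : u b ^ 2 - u a ^ 2 = ∫ x in a..b, 2 * u x * deriv u x := by
    refine (intervalIntegral.integral_eq_sub_of_hasDerivAt (f := fun x => u x ^ 2)
      (fun x hx => ?_) ?_).symm
    · rw [uIcc_of_le hab] at hx
      simpa using (hu x hx).hasDerivAt.fun_pow 2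
    · exact ((continuousOn_const.mul hcont).mul hu').intervalIntegrable_of_Icc hab
  calc |m| * |u b ^ 2 - u a ^ 2| ≤ |m| * ∫ x in a..b, |2 * u x * deriv u x| := by
        rw [hftc]
        gcongr
        exact intervalIntegral.abs_integral_le_integral_abs hab
    _ = ∫ x in a..b, 2 * |m * u x * deriv u x| := by
        rw [← intervalIntegral.integral_const_mul]
        congr 1 with x
        simp only [abs_mul, abs_two]
        ring
    _ ≤ _ := by
        refine intervalIntegral.integral_mono_on hab ?_ ?_
          fun x hx => two_mul_abs_mul_le (hpos x hx) m _ _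
        · exact ((continuousOn_const.mul hcont).mul hu').abs.const_smul (2 : ℝ)
            |>.intervalIntegrable_of_Icc hab
        · exact (continuousOn_energyDensity m hcont hu' fun x hx => (hpos x hx).ne')
            |>.intervalIntegrable_of_Icc hab

theorem integral_energyDensity_eq {α κ m : ℝ} (hα : 0 ≤ α) (ha : 0 < a) (hab : a ≤ b)
    (hu : ∀ x ∈ Icc a b, DifferentiableAt ℝ u x ∧ DifferentiableAt ℝ (deriv u) x)
    (hode : ∀ x ∈ Icc a b, deriv (fun s => s * deriv u s) x - (m ^ 2 / x) * u x
      + 2 * x * u x ^ 3 / (1 + α * u x ^ 2) - 2 * κ * x * u x = 0) :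
    ∫ x in a..b, energyDensity m u x =
      b * deriv u b * u b - a * deriv u a * u a
        + ∫ x in a..b, (2 * x * u x ^ 4 / (1 + α * u x ^ 2) - 2 * κ * x * u x ^ 2) := by
  have hcont : ContinuousOn u (Icc a b) := fun x hx => (hu x hx).1.continuousAt.continuousWithinAt
  have hcont' : ContinuousOn (deriv u) (Icc a b) :=
    fun x hx => (hu x hx).2.continuousAt.continuousWithinAt
  have hF := (continuousOn_energyDensity m hcont hcont' fun x hx => (ha.trans_le hx.1).ne')
    |>.intervalIntegrable_of_Icc (μ := volume) hab
  have hG := (continuousOn_nonlinearity hα κ hcont).intervalIntegrable_of_Icc (μ := volume) hab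
  have hderiv : ∀ x ∈ uIcc a b, HasDerivAt (fun r => r * deriv u r * u r)
      (energyDensity m u x - (2 * x * u x ^ 4 / (1 + α * u x ^ 2) - 2 * κ * x * u x ^ 2)) x := by
    intro x hx
    rw [uIcc_of_le hab] at hx
    obtain ⟨hu₁, hu₂⟩ := hu x hx
    have hx0 : x ≠ 0 := (ha.trans_le hx.1).ne'
    have hden : 1 + α * u x ^ 2 ≠ 0 := by positivity
    have hflux : HasDerivAt (fun s => s * deriv u s) (deriv (fun s => s * deriv u s) x) x :=
      (differentiableAt_id.mul hu₂).hasDerivAt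
    have hD : deriv (fun s => s * deriv u s) x
        = m ^ 2 / x * u x - 2 * x * u x ^ 3 / (1 + α * u x ^ 2) + 2 * κ * x * u x := by
      linarith [hode x hx]
    have hprod : HasDerivAt (fun r => r * deriv u r * u r)
        (deriv (fun s => s * deriv u s) x * u x + x * deriv u x * deriv u x) x :=
      hflux.mul hu₁.hasDerivAt
    convert hprod using 1
    rw [energyDensity, hD]
    field_simp
    ring
  have h := intervalIntegral.integral_eq_sub_of_hasDerivAt hderiv (hF.sub hG)
  rw [intervalIntegral.integral_sub hF hG] at h
  linarith

theorem integral_nonlinearity_le {α κ M : ℝ} (hα : 0 ≤ α) (hκ : 0 ≤ κ) (ha : 0 ≤ a)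
    (hab : a ≤ b) (hu : ContinuousOn u (Icc a b)) (hM : ∀ x ∈ Icc a b, u x ^ 2 ≤ M) :
    ∫ x in a..b, (2 * x * u x ^ 4 / (1 + α * u x ^ 2) - 2 * κ * x * u x ^ 2)
      ≤ 2 * M * ∫ x in a..b, x * u x ^ 2 := by
  rw [← intervalIntegral.integral_const_mul]
  refine intervalIntegral.integral_mono_on hab ?_ ?_ fun x hx => ?_
  · exact (continuousOn_nonlinearity hα κ hu).intervalIntegrable_of_Icc hab
  · exact (continuousOn_const.mul (continuousOn_id.mul (hu.pow 2))).intervalIntegrable_of_Icc hab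
  · have hx₀ : 0 ≤ x := ha.trans hx.1
    have hsat : 2 * x * u x ^ 4 / (1 + α * u x ^ 2) ≤ 2 * x * u x ^ 4 :=
      div_le_self (by positivity) (by nlinarith [sq_nonneg (u x)])
    have hcap : 2 * x * u x ^ 4 ≤ 2 * M * (x * u x ^ 2) := by
      nlinarith [mul_nonneg hx₀ (sq_nonneg (u x)), hM x hx]
    nlinarith [mul_nonneg (mul_nonneg hκ hx₀) (sq_nonneg (u x))]

end RadialIdentities

namespace IsVortexSol

variable {α κ R : ℝ} {n : ℤ} {u : ℝ → ℝ}

theorem abs_mul_two_mul_sq_sub_le (hu : IsVortexSol α n κ R u) (hα : 0 < α) (hκ : 0 ≤ κ)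
    {a r₀ b : ℝ} (ha : 0 < a) (har : a ≤ r₀) (hrb : r₀ ≤ b) (hb : b < R)
    (hmax : ∀ x ∈ Icc a b, u x ^ 2 ≤ u r₀ ^ 2) :
    |(n : ℝ)| * (2 * u r₀ ^ 2 - u a ^ 2 - u b ^ 2) ≤
      b * deriv u b * u b - a * deriv u a * u a
        + 2 * u r₀ ^ 2 * ∫ x in Ioo 0 R, x * u x ^ 2 := by
  obtain ⟨hcont, hdiff, -, -, hode⟩ := hu
  have hsub : Icc a b ⊆ Ioo 0 R := fun x hx => ⟨ha.trans_le hx.1, hx.2.trans_lt hb⟩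
  have hd : ∀ x ∈ Icc a b, DifferentiableAt ℝ u x ∧ DifferentiableAt ℝ (deriv u) x :=
    fun x hx => hdiff x (hsub hx)
  have hcont₁ : ContinuousOn u (Icc a b) := hcont.mono (hsub.trans Ioo_subset_Icc_self)
  have hcont₂ : ContinuousOn (deriv u) (Icc a b) :=
    fun x hx => (hd x hx).2.continuousAt.continuousWithinAt
  have hF := continuousOn_energyDensity (n : ℝ) hcont₁ hcont₂ fun x hx => (hsub hx).1.ne'
  have hleft := abs_mul_abs_sq_sub_sq_le_integral (n : ℝ) ha har
    (fun x hx => (hd x ⟨hx.1, hx.2.trans hrb⟩).1) (hcont₂.mono (Icc_subset_Icc le_rfl hrb))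
  have hright := abs_mul_abs_sq_sub_sq_le_integral (n : ℝ) (ha.trans_le har) hrb
    (fun x hx => (hd x ⟨har.trans hx.1, hx.2⟩).1) (hcont₂.mono (Icc_subset_Icc har le_rfl))
  have hsplit := intervalIntegral.integral_add_adjacent_intervals
    ((hF.mono (Icc_subset_Icc le_rfl hrb)).intervalIntegrable_of_Icc (μ := volume) har)
    ((hF.mono (Icc_subset_Icc har le_rfl)).intervalIntegrable_of_Icc (μ := volume) hrb)
  have hid := integral_energyDensity_eq hα.le ha (har.trans hrb) hd fun x hx => hode x (hsub hx)
  have hnl := integral_nonlinearity_le hα.le hκ ha.le (har.trans hrb) hcont₁ hmax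
  have hflux : ∫ x in a..b, x * u x ^ 2 ≤ ∫ x in Ioo 0 R, x * u x ^ 2 := by
    rw [intervalIntegral.integral_of_le (har.trans hrb)]
    refine setIntegral_mono_set ?_ ?_ ?_
    · exact (continuousOn_id.mul (hcont.pow 2)).integrableOn_Icc.mono_set Ioo_subset_Icc_self
    · filter_upwards [ae_restrict_mem measurableSet_Ioo] with x hx
      exact mul_nonneg hx.1.le (sq_nonneg _)
    · exact (Ioc_subset_Icc_self.trans hsub).eventuallyLE
  have h₁ : |(n : ℝ)| * (u r₀ ^ 2 - u a ^ 2) ≤ |(n : ℝ)| * |u r₀ ^ 2 - u a ^ 2| :=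
    mul_le_mul_of_nonneg_left (le_abs_self _) (abs_nonneg _)
  have h₂ : |(n : ℝ)| * (u r₀ ^ 2 - u b ^ 2) ≤ |(n : ℝ)| * |u b ^ 2 - u r₀ ^ 2| :=
    mul_le_mul_of_nonneg_left (abs_sub_comm (u b ^ 2) _ ▸ le_abs_self _) (abs_nonneg _)
  have h₃ := mul_le_mul_of_nonneg_left hflux (by positivity : 0 ≤ 2 * u r₀ ^ 2)
  linarith

theorem abs_mul_sq_le_of_isMaxOn (hu : IsVortexSol α n κ R u) (hα : 0 < α) (hκ : 0 ≤ κ)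
    {r₀ : ℝ} (hr₀ : r₀ ∈ Ioo 0 R) (hmax : IsMaxOn (fun x => u x ^ 2) (Icc 0 R) r₀) :
    |(n : ℝ)| * u r₀ ^ 2 ≤ u r₀ ^ 2 * ∫ x in Ioo 0 R, x * u x ^ 2 := by
  have ⟨hcont, hdiff, hu0, huR, _⟩ := hu
  have hbound : ∀ ε > 0, |(n : ℝ)| * (2 * u r₀ ^ 2 - 2 * ε) ≤
      2 * u r₀ ^ 2 * ∫ x in Ioo 0 R, x * u x ^ 2 := by
    intro ε hε
    obtain ⟨a, ha, hua, hφa⟩ := exists_sq_lt_and_mul_deriv_nonneg_of_left_eq_zero hr₀.1 hε hu0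
      (hcont.mono (Icc_subset_Icc le_rfl hr₀.2.le))
      fun x hx => (hdiff x ⟨hx.1, hx.2.trans hr₀.2⟩).1
    obtain ⟨b, hb, hub, hφb⟩ := exists_sq_lt_and_mul_deriv_nonpos_of_right_eq_zero hr₀.2 hε huR
      (hcont.mono (Icc_subset_Icc hr₀.1.le le_rfl))
      fun x hx => (hdiff x ⟨hr₀.1.trans hx.1, hx.2⟩).1
    have key := hu.abs_mul_two_mul_sq_sub_le hα hκ ha.1 ha.2.le hb.1.le hb.2
      fun x hx => hmax ⟨ha.1.le.trans hx.1, hx.2.trans hb.2.le⟩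
    have hφa' : 0 ≤ a * deriv u a * u a := by nlinarith [ha.1]
    have hφb' : b * deriv u b * u b ≤ 0 := by nlinarith [hb.1, hr₀.1]
    nlinarith [abs_nonneg (n : ℝ)]
  have hlim : Tendsto (fun ε => |(n : ℝ)| * (2 * u r₀ ^ 2 - 2 * ε)) (𝓝[>] 0)
      (𝓝 (|(n : ℝ)| * (2 * u r₀ ^ 2 - 2 * 0))) :=
    tendsto_nhdsWithin_of_tendsto_nhds (Continuous.tendsto (by fun_prop) 0)
  have := le_of_tendsto hlim (eventually_nhdsWithin_of_forall hbound)
  linarith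

end IsVortexSol

theorem stmt8_general (α : ℝ) (hα : 0 < α) (n : ℤ) (hn : 1 ≤ |n|) (κ R : ℝ)
    (u : ℝ → ℝ) (hu : IsVortexSol α n κ R u)
    (hnt : ∃ r ∈ Icc (0 : ℝ) R, u r ≠ 0)
    (hwind : ((|n| : ℤ) : ℝ) ≥ fluxQ R u / Real.pi) :
    κ < 0 := by
  by_contra! hκ
  obtain ⟨r, hr, hur⟩ := hnt
  obtain ⟨r₀, hr₀, hmax⟩ := isCompact_Icc.exists_isMaxOn ⟨r, hr⟩ (hu.1.pow 2)
  have hM : 0 < u r₀ ^ 2 := (sq_pos_of_ne_zero hur).trans_le (hmax hr)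
  have hr₀' : r₀ ∈ Ioo 0 R := by
    refine ⟨hr₀.1.lt_of_ne ?_, hr₀.2.lt_of_ne ?_⟩ <;> rintro rfl
    · simp [hu.2.2.1] at hM
    · simp [hu.2.2.2.1] at hM
  have hNC := hu.abs_mul_sq_le_of_isMaxOn hα hκ hr₀' hmax
  have hflux : fluxQ R u / Real.pi = 2 * ∫ x in Ioo 0 R, x * u x ^ 2 := by
    rw [fluxQ]
    field_simp
  rw [hflux, Int.cast_abs] at hwind
  have hn' : (1 : ℝ) ≤ |(n : ℝ)| := by exact_mod_cast hn
  nlinarith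

/-- large winding number forces a negative propagation constant. -/
theorem stmt8 (α : ℝ) (hα : 0 < α) (n : ℤ) (hn : 1 ≤ |n|) (κ R : ℝ) (hR : 0 < R)
    (u : ℝ → ℝ) (hu : IsVortexSol α n κ R u) (hE : FiniteEnergy α R u)
    (hnt : ∃ r ∈ Icc (0 : ℝ) R, u r ≠ 0)
    (hwind : ((|n| : ℤ) : ℝ) ≥ fluxQ R u / Real.pi) :
    κ < 0 :=
  stmt8_general α hα n hn κ R u hu hnt hwind
end

section
/- Let R > 0 and let u : (0,R] → ℝ be continuously differentiable with ∫₀^R r u'(r)² dr < ∞ and ∫₀^R u(r)²/r dr < ∞. Then u(r) tends to 0 as r → 0⁺. -/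
/-! Pointwise `r u'² + u²/r ≥ |2 u u'| = |(u²)'|`, so `(u²)'` is integrable on `(0, R)` and `u²`
has a limit `L` at `0⁺`. If `L ≠ 0`, then `u²/r` dominates a multiple of `1/r = (log r)'` near `0`,
which is not integrable since `log` is unbounded there; hence `L = 0`. -/

open MeasureTheory Set Filter

open Topology

lemma abs_two_mul_mul_le_mul_sq_add_sq_div {r : ℝ} (hr : 0 < r) (a b : ℝ) :
    |2 * a * b| ≤ r * b ^ 2 + a ^ 2 / r := by
  rw [← sub_nonneg]
  have key : r * b ^ 2 + a ^ 2 / r - |2 * a * b| = (|a| - r * |b|) ^ 2 / r := by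
    field_simp
    rw [abs_mul, abs_mul, abs_two]
    ring_nf
    simp only [sq_abs]
  rw [key]
  positivity

theorem tendsto_nhdsGT_of_hasDerivAt_of_integrableOn {E : Type*} [NormedAddCommGroup E]
    [NormedSpace ℝ E] [CompleteSpace E] {f f' : ℝ → E} {a b : ℝ} (hab : a < b)
    (hderiv : ∀ x ∈ Ioc a b, HasDerivAt f (f' x) x) (hint : IntegrableOn f' (Ioo a b)) :
    Tendsto f (𝓝[>] a) (𝓝 (f b - ∫ x in a..b, f' x)) := by
  have hint' : IntegrableOn f' (uIcc a b) := by
    rwa [uIcc_of_le hab.le, integrableOn_Icc_iff_integrableOn_Ioo]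
  have hprim : Tendsto (fun t => ∫ x in t..b, f' x) (𝓝[>] a) (𝓝 (∫ x in a..b, f' x)) := by
    have := intervalIntegral.continuousOn_primitive_interval_left hint' a left_mem_uIcc
    rw [uIcc_of_le hab.le, ← nhdsWithin_Ioo_eq_nhdsGT hab] at *
    exact this.mono Ioo_subset_Icc_self
  refine (tendsto_const_nhds.sub hprim).congr' ?_
  filter_upwards [Ioo_mem_nhdsGT hab] with t ht
  have hsub : uIcc t b ⊆ Ioc a b := by
    rw [uIcc_of_le ht.2.le]
    exact fun x hx => ⟨ht.1.trans_le hx.1, hx.2⟩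
  have hint_tb : IntervalIntegrable f' volume t b :=
    (intervalIntegrable_iff_integrableOn_Ioo_of_le ht.2.le).2
      (hint.mono_set (Ioo_subset_Ioo_left ht.1.le))
  rw [intervalIntegral.integral_eq_sub_of_hasDerivAt (fun x hx => hderiv x (hsub hx)) hint_tb,
    sub_sub_cancel]

lemma eq_zero_of_tendsto_of_integrableOn_div {f : ℝ → ℝ} {L R : ℝ} (hR : 0 < R)
    (hf : Tendsto f (𝓝[>] 0) (𝓝 L)) (hint : IntegrableOn (fun r => f r / r) (Ioo 0 R)) :
    L = 0 := by
  by_contra hL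
  have hbig : (fun _ => (1 : ℝ)) =O[𝓝[>] 0] f :=
    (Asymptotics.isBigO_const_left_iff_pos_le_norm one_ne_zero).2
      ⟨‖L‖ / 2, by positivity, hf.norm.eventually (eventually_ge_nhds (by simpa using hL))⟩
  refine not_integrableOn_of_tendsto_norm_atTop_of_deriv_isBigO_filter (f := Real.log) (𝓝[>] 0)
    (Ioo_mem_nhdsGT hR) ?_ ?_ ?_ hint
  · filter_upwards [self_mem_nhdsWithin] with x hx
    exact Real.differentiableAt_log (ne_of_gt hx)
  · exact tendsto_abs_atBot_atTop.comp Real.tendsto_log_nhdsGT_zero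
  · rw [Real.deriv_log']
    simpa [div_eq_mul_inv] using hbig.mul (Asymptotics.isBigO_refl (fun x : ℝ => x⁻¹) _)

theorem stmt10_general (R : ℝ) (hR : 0 < R) (u : ℝ → ℝ)
    (hdiff : ∀ r ∈ Ioc (0 : ℝ) R, DifferentiableAt ℝ u r)
    (h1 : IntegrableOn (fun r => r * (deriv u r) ^ 2) (Ioo 0 R))
    (h2 : IntegrableOn (fun r => (u r) ^ 2 / r) (Ioo 0 R)) :
    Filter.Tendsto u (nhdsWithin 0 (Ioi 0)) (nhds 0) := by
  have hsq : ∀ r ∈ Ioc 0 R, HasDerivAt (fun r => u r ^ 2) (2 * u r * deriv u r) r :=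
    fun r hr => by simpa using (hdiff r hr).hasDerivAt.fun_pow 2
  have hint : IntegrableOn (fun r => 2 * u r * deriv u r) (Ioo 0 R) := by
    have hu : ContinuousOn u (Ioo 0 R) := fun r hr =>
      (hdiff r (Ioo_subset_Ioc_self hr)).continuousAt.continuousWithinAt
    refine (h1.add h2).mono' ?_ (ae_restrict_of_forall_mem measurableSet_Ioo fun r hr => ?_)
    · exact ((continuousOn_const.mul hu).aestronglyMeasurable measurableSet_Ioo).mul
        (measurable_deriv u).aestronglyMeasurable
    · exact abs_two_mul_mul_le_mul_sq_add_sq_div hr.1 _ _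
  have hlim := tendsto_nhdsGT_of_hasDerivAt_of_integrableOn hR hsq hint
  rw [eq_zero_of_tendsto_of_integrableOn_div hR hlim h2] at hlim
  refine (tendsto_zero_iff_abs_tendsto_zero u).2 ?_
  simpa [Real.sqrt_sq_eq_abs, Function.comp_def] using hlim.sqrt

/-- `u(r) → 0` as `r → 0⁺`. -/
theorem stmt10 (R : ℝ) (hR : 0 < R) (u : ℝ → ℝ)
    (hdiff : ∀ r ∈ Ioc (0 : ℝ) R, DifferentiableAt ℝ u r)
    (hcont : ContinuousOn (deriv u) (Ioc 0 R))
    (h1 : IntegrableOn (fun r => r * (deriv u r) ^ 2) (Ioo 0 R))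
    (h2 : IntegrableOn (fun r => (u r) ^ 2 / r) (Ioo 0 R)) :
    Filter.Tendsto u (nhdsWithin 0 (Ioi 0)) (nhds 0) :=
  stmt10_general R hR u hdiff h1 h2
end

section
/- Let α > 0, let n be an integer with |n| ≥ 1, let κ ∈ ℝ and R > 0. If u ∈ X is not identically zero and γ_κ(u) = 0, then ∫₀^R ( r u'(r)² + (n²/r) u(r)² − 2(α⁻¹ − κ) r u(r)² + 2 α⁻¹ r u(r)²/(1 + α u(r)²)² ) dr = −2 ∫₀^R r u(r)⁴/(1 + α u(r)²)² dr, and this quantity is strictly negative. -/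
open MeasureTheory Set Filter

/-- `⟨γ_κ'(u), u⟩ < 0` on the Nehari manifold. -/
theorem stmt11 (α : ℝ) (hα : 0 < α) (n : ℤ) (hn : 1 ≤ |n|) (κ R : ℝ) (hR : 0 < R)
    (u : ℝ → ℝ) (hu : MemX R u) (hnt : ∃ r ∈ Icc (0 : ℝ) R, u r ≠ 0)
    (hγ : gammaK α n κ R u = 0) :
    ((∫ r in Ioo (0 : ℝ) R,
        (r * (deriv u r) ^ 2 + ((n : ℝ) ^ 2 / r) * (u r) ^ 2
          - 2 * (α⁻¹ - κ) * r * (u r) ^ 2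
          + 2 * α⁻¹ * r * (u r) ^ 2 / (1 + α * (u r) ^ 2) ^ 2))
      = -2 * (∫ r in Ioo (0 : ℝ) R, r * (u r) ^ 4 / (1 + α * (u r) ^ 2) ^ 2)) ∧
    (-2 * (∫ r in Ioo (0 : ℝ) R, r * (u r) ^ 4 / (1 + α * (u r) ^ 2) ^ 2) < 0) := by
  obtain ⟨hc, hcd, h0, hRR, hI0⟩ := hu
  have hden : ∀ r : ℝ, 0 < 1 + α * (u r) ^ 2 := fun r => by positivity
  -- integrability pieces
  have hm1 : AEStronglyMeasurable (fun r => r * (deriv u r) ^ 2)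
      (volume.restrict (Ioo 0 R)) :=
    (measurable_id.mul ((measurable_deriv u).pow_const 2)).aestronglyMeasurable
  have h1 : IntegrableOn (fun r => r * (deriv u r) ^ 2) (Ioo 0 R) := by
    refine hI0.mono' hm1 ?_
    filter_upwards [ae_restrict_mem measurableSet_Ioo] with r hr
    have hr0 : 0 < r := hr.1
    have h1 : 0 ≤ r * (deriv u r) ^ 2 := by positivity
    have h2 : 0 ≤ (u r) ^ 2 / r := by positivity
    rw [Real.norm_eq_abs, abs_of_nonneg h1]; linarith
  have h2 : IntegrableOn (fun r => (u r) ^ 2 / r) (Ioo 0 R) := by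
    have h := hI0.sub h1
    exact h.congr (Filter.Eventually.of_forall (fun r => by simp))
  have h2' : IntegrableOn (fun r => ((n : ℝ) ^ 2 / r) * (u r) ^ 2) (Ioo 0 R) := by
    have h := h2.const_mul ((n : ℝ) ^ 2)
    exact h.congr (Filter.Eventually.of_forall (fun r => by ring_nf))
  have hcIcc : ∀ (f : ℝ → ℝ), ContinuousOn f (Icc 0 R) → IntegrableOn f (Ioo 0 R) :=
    fun f hf => (hf.integrableOn_Icc).mono_set Ioo_subset_Icc_self
  have h3 : IntegrableOn (fun r => 2 * (α⁻¹ - κ) * r * (u r) ^ 2) (Ioo 0 R) := by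
    refine hcIcc _ ?_
    exact (continuousOn_const.mul continuousOn_id).mul (hc.pow 2)
  have hcden : ContinuousOn (fun r => 1 + α * (u r) ^ 2) (Icc 0 R) :=
    continuousOn_const.add (continuousOn_const.mul (hc.pow 2))
  have hdenne : ∀ r ∈ Icc (0:ℝ) R, (1 + α * (u r) ^ 2) ≠ 0 := fun r _ => (hden r).ne'
  have h4 : IntegrableOn (fun r => 2 * α⁻¹ * r * (u r) ^ 2 / (1 + α * (u r) ^ 2))
      (Ioo 0 R) := by
    refine hcIcc _ ?_
    exact (((continuousOn_const.mul continuousOn_id).mul (hc.pow 2)).div hcden hdenne)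
  have hg : IntegrableOn (fun r => r * (u r) ^ 4 / (1 + α * (u r) ^ 2) ^ 2) (Ioo 0 R) := by
    refine hcIcc _ ?_
    exact ((continuousOn_id.mul (hc.pow 4)).div (hcden.pow 2)
      (fun r hr => pow_ne_zero 2 (hdenne r hr)))
  have hf : IntegrableOn (fun r => r * (deriv u r) ^ 2 + ((n : ℝ) ^ 2 / r) * (u r) ^ 2
      - 2 * (α⁻¹ - κ) * r * (u r) ^ 2
      + 2 * α⁻¹ * r * (u r) ^ 2 / (1 + α * (u r) ^ 2)) (Ioo 0 R) :=
    ((h1.add h2').sub h3).add h4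
  -- ∫ f = 0
  have hIf : (∫ r in Ioo (0:ℝ) R, (r * (deriv u r) ^ 2 + ((n : ℝ) ^ 2 / r) * (u r) ^ 2
      - 2 * (α⁻¹ - κ) * r * (u r) ^ 2
      + 2 * α⁻¹ * r * (u r) ^ 2 / (1 + α * (u r) ^ 2))) = 0 := by
    have := hγ
    unfold gammaK at this
    linarith
  -- pointwise identity
  have hpt : ∀ r : ℝ, r * (deriv u r) ^ 2 + ((n : ℝ) ^ 2 / r) * (u r) ^ 2
      - 2 * (α⁻¹ - κ) * r * (u r) ^ 2
      + 2 * α⁻¹ * r * (u r) ^ 2 / (1 + α * (u r) ^ 2) ^ 2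
      = (r * (deriv u r) ^ 2 + ((n : ℝ) ^ 2 / r) * (u r) ^ 2
          - 2 * (α⁻¹ - κ) * r * (u r) ^ 2
          + 2 * α⁻¹ * r * (u r) ^ 2 / (1 + α * (u r) ^ 2))
        - 2 * (r * (u r) ^ 4 / (1 + α * (u r) ^ 2) ^ 2) := by
    intro r
    have hne : (1 + α * (u r) ^ 2) ≠ 0 := (hden r).ne'
    field_simp
    ring
  have hmain : (∫ r in Ioo (0 : ℝ) R,
        (r * (deriv u r) ^ 2 + ((n : ℝ) ^ 2 / r) * (u r) ^ 2
          - 2 * (α⁻¹ - κ) * r * (u r) ^ 2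
          + 2 * α⁻¹ * r * (u r) ^ 2 / (1 + α * (u r) ^ 2) ^ 2))
      = -2 * (∫ r in Ioo (0 : ℝ) R, r * (u r) ^ 4 / (1 + α * (u r) ^ 2) ^ 2) := by
    calc (∫ r in Ioo (0 : ℝ) R,
        (r * (deriv u r) ^ 2 + ((n : ℝ) ^ 2 / r) * (u r) ^ 2
          - 2 * (α⁻¹ - κ) * r * (u r) ^ 2
          + 2 * α⁻¹ * r * (u r) ^ 2 / (1 + α * (u r) ^ 2) ^ 2))
        = ∫ r in Ioo (0 : ℝ) R,
          ((r * (deriv u r) ^ 2 + ((n : ℝ) ^ 2 / r) * (u r) ^ 2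
            - 2 * (α⁻¹ - κ) * r * (u r) ^ 2
            + 2 * α⁻¹ * r * (u r) ^ 2 / (1 + α * (u r) ^ 2))
          - 2 * (r * (u r) ^ 4 / (1 + α * (u r) ^ 2) ^ 2)) := by
          exact integral_congr_ae (Filter.Eventually.of_forall (fun r => hpt r))
      _ = (∫ r in Ioo (0:ℝ) R, (r * (deriv u r) ^ 2 + ((n : ℝ) ^ 2 / r) * (u r) ^ 2
            - 2 * (α⁻¹ - κ) * r * (u r) ^ 2
            + 2 * α⁻¹ * r * (u r) ^ 2 / (1 + α * (u r) ^ 2)))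
          - ∫ r in Ioo (0:ℝ) R, 2 * (r * (u r) ^ 4 / (1 + α * (u r) ^ 2) ^ 2) := by
          exact integral_sub hf (hg.const_mul 2)
      _ = -2 * (∫ r in Ioo (0 : ℝ) R, r * (u r) ^ 4 / (1 + α * (u r) ^ 2) ^ 2) := by
          rw [hIf, MeasureTheory.integral_const_mul]; ring
  refine ⟨hmain, ?_⟩
  -- strict positivity of ∫ g
  obtain ⟨r₀, hr₀Icc, hr₀⟩ := hnt
  have hr₀Ioo : r₀ ∈ Ioo (0:ℝ) R := by
    rcases eq_or_lt_of_le hr₀Icc.1 with h | h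
    · exact absurd h0 (by rw [← h] at hr₀; simpa using hr₀)
    rcases eq_or_lt_of_le hr₀Icc.2 with h' | h'
    · exact absurd hRR (by rw [h'] at hr₀; simpa using hr₀)
    exact ⟨h, h'⟩
  have hca : ContinuousAt u r₀ := by
    have : Icc (0:ℝ) R ∈ nhds r₀ :=
      mem_nhds_iff.mpr ⟨Ioo 0 R, Ioo_subset_Icc_self, isOpen_Ioo, hr₀Ioo⟩
    exact (hc r₀ hr₀Icc).continuousAt this
  have hev : ∀ᶠ r in nhds r₀, u r ≠ 0 ∧ r ∈ Ioo (0:ℝ) R :=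
    (hca.eventually_ne hr₀).and (isOpen_Ioo.eventually_mem hr₀Ioo)
  obtain ⟨ε, hε, hball⟩ := Metric.eventually_nhds_iff_ball.mp hev
  set a := r₀ - ε / 2
  set b := r₀ + ε / 2
  have hab : a < b := by simp only [a, b]; linarith
  have hsub : Ioc a b ⊆ Metric.ball r₀ ε := by
    intro x hx
    rw [Metric.mem_ball, Real.dist_eq, abs_lt]
    constructor <;> [skip; skip] <;> simp only [a, b] at hx <;>
      [linarith [hx.1]; linarith [hx.2]]
  have hsub' : Ioc a b ⊆ Ioo (0:ℝ) R := fun x hx => (hball x (hsub hx)).2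
  have hgsub : IntegrableOn (fun r => r * (u r) ^ 4 / (1 + α * (u r) ^ 2) ^ 2)
      (Ioc a b) := hg.mono_set hsub'
  have hposab : (0:ℝ) < ∫ r in a..b, r * (u r) ^ 4 / (1 + α * (u r) ^ 2) ^ 2 := by
    apply intervalIntegral.intervalIntegral_pos_of_pos_on
    · rw [intervalIntegrable_iff_integrableOn_Ioc_of_le hab.le]; exact hgsub
    · intro x hx
      have hb := hball x (hsub (Ioo_subset_Ioc_self hx))
      have hx0 : 0 < x := hb.2.1
      have hux : u x ≠ 0 := hb.1
      positivity
    · exact hab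
  have hineq : (∫ r in a..b, r * (u r) ^ 4 / (1 + α * (u r) ^ 2) ^ 2)
      ≤ ∫ r in Ioo (0:ℝ) R, r * (u r) ^ 4 / (1 + α * (u r) ^ 2) ^ 2 := by
    rw [intervalIntegral.intervalIntegral_eq_integral_uIoc, if_pos hab.le,
      uIoc_of_le hab.le, one_smul]
    apply setIntegral_mono_set hg
    · filter_upwards [ae_restrict_mem measurableSet_Ioo] with r hr
      have hr0 : 0 < r := hr.1
      positivity
    · exact Filter.Eventually.of_forall hsub'
  linarith
end

section
/- Let α > 0, let n be an integer with |n| ≥ 1, let κ ∈ ℝ and R > 0. If u ∈ X satisfies γ_κ(u) = 0, then I_κ(u) = α⁻² ∫₀^R r ( ln(1 + α u(r)²) − α u(r)²/(1 + α u(r)²) ) dr; if moreover u is not identically zero, then I_κ(u) > 0. -/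
open MeasureTheory Set Filter

/-!
The integrands of `I_κ` and `γ_κ` differ exactly by `α⁻² r (log (1 + α u²) - α u² / (1 + α u²))`,
so on the Nehari set `γ_κ(u) = 0` the action is `α⁻²` times the integral of this difference.
Since `log (1 + t) > t / (1 + t)` for `t > 0`, the difference is nonnegative and continuous, and
it is positive near any point where `u ≠ 0`; such a point is interior because `u` vanishes at the
endpoints, so the integral is positive.
-/

lemma div_one_add_le_log_one_add {t : ℝ} (ht : 0 ≤ t) : t / (1 + t) ≤ Real.log (1 + t) := by
  have h := Real.one_sub_inv_le_log_of_pos (by linarith : (0 : ℝ) < 1 + t)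
  have hrw : 1 - (1 + t)⁻¹ = t / (1 + t) := by field_simp; ring
  rwa [hrw] at h

lemma div_one_add_lt_log_one_add {t : ℝ} (ht : 0 < t) : t / (1 + t) < Real.log (1 + t) := by
  have h := Real.log_lt_sub_one_of_pos (inv_pos.2 (by linarith : (0 : ℝ) < 1 + t))
    (inv_ne_one.2 (by linarith))
  have hrw : (1 + t)⁻¹ - 1 = -(t / (1 + t)) := by field_simp; ring
  rw [Real.log_inv, hrw] at h
  linarith

noncomputable def logGap (α x : ℝ) : ℝ :=
  Real.log (1 + α * x ^ 2) - α * x ^ 2 / (1 + α * x ^ 2)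

lemma logGap_nonneg {α : ℝ} (hα : 0 ≤ α) (x : ℝ) : 0 ≤ logGap α x :=
  sub_nonneg.2 (div_one_add_le_log_one_add (by positivity))

lemma logGap_pos {α x : ℝ} (hα : 0 < α) (hx : x ≠ 0) : 0 < logGap α x :=
  sub_pos.2 (div_one_add_lt_log_one_add (by positivity))

lemma continuous_logGap {α : ℝ} (hα : 0 ≤ α) : Continuous (logGap α) := by
  have hpos : ∀ x : ℝ, 0 < 1 + α * x ^ 2 := fun x => by positivity
  unfold logGap
  exact ((by fun_prop : Continuous fun x : ℝ => 1 + α * x ^ 2).log fun x => (hpos x).ne').sub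
    ((by fun_prop : Continuous fun x : ℝ => α * x ^ 2).div (by fun_prop) fun x => (hpos x).ne')

lemma setIntegral_pos_of_continuousOn_of_nonneg {X : Type*} [TopologicalSpace X]
    [MeasurableSpace X] [OpensMeasurableSpace X] {μ : Measure X} [μ.IsOpenPosMeasure]
    {f : X → ℝ} {s : Set X} {x : X} (hs : IsOpen s) (hf : ContinuousOn f s)
    (hfi : IntegrableOn f s μ) (hf₀ : ∀ y ∈ s, 0 ≤ f y) (hx : x ∈ s) (hfx : 0 < f x) :
    0 < ∫ y in s, f y ∂μ := by
  rw [setIntegral_pos_iff_support_of_nonneg_ae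
    (ae_restrict_of_forall_mem hs.measurableSet hf₀) hfi]
  refine lt_of_lt_of_le ((hf.isOpen_inter_preimage hs isOpen_Ioi).measure_pos μ ⟨x, hx, hfx⟩) ?_
  exact measure_mono fun y ⟨hys, hfy⟩ => ⟨hfy.ne', hys⟩

section

variable {α κ R : ℝ} {n : ℤ} {u : ℝ → ℝ}

lemma MemX.mem_Ioo_of_ne_zero {r : ℝ} (hu : MemX R u) (hr : r ∈ Icc 0 R) (hur : u r ≠ 0) :
    r ∈ Ioo 0 R :=
  ⟨hr.1.lt_of_ne (by rintro rfl; exact hur hu.2.2.1),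
    hr.2.lt_of_ne (by rintro rfl; exact hur hu.2.2.2.1)⟩

lemma MemX.integrableOn_sq_div (hu : MemX R u) :
    IntegrableOn (fun r => u r ^ 2 / r) (Ioo 0 R) := by
  obtain ⟨hcont, -, -, -, hint⟩ := hu
  refine hint.mono' ?_ (ae_restrict_of_forall_mem measurableSet_Ioo fun r hr => ?_)
  · exact ((hcont.mono Ioo_subset_Icc_self).pow 2 |>.div continuousOn_id
      fun r hr => hr.1.ne').aestronglyMeasurable measurableSet_Ioo
  · have := mul_nonneg hr.1.le (sq_nonneg (deriv u r))
    rw [Real.norm_of_nonneg (div_nonneg (sq_nonneg _) hr.1.le)]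
    linarith

lemma MemX.integrableOn_gammaK_integrand (hα : 0 ≤ α) (hu : MemX R u) :
    IntegrableOn (fun r => r * (deriv u r) ^ 2 + ((n : ℝ) ^ 2 / r) * (u r) ^ 2
      - 2 * (α⁻¹ - κ) * r * (u r) ^ 2 + 2 * α⁻¹ * r * (u r) ^ 2 / (1 + α * (u r) ^ 2))
      (Ioo 0 R) := by
  have hcont : ContinuousOn (fun r => (-2 * (α⁻¹ - κ)) * (r * u r ^ 2)
      + 2 * α⁻¹ * (r * u r ^ 2 / (1 + α * u r ^ 2))) (Icc 0 R) :=
    (continuousOn_const.mul (continuousOn_id.mul (hu.1.pow 2))).add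
      (continuousOn_const.mul ((continuousOn_id.mul (hu.1.pow 2)).div
        (continuousOn_const.add (continuousOn_const.mul (hu.1.pow 2)))
        fun r _ => by positivity))
  refine ((hu.2.2.2.2.add (hu.integrableOn_sq_div.const_mul ((n : ℝ) ^ 2 - 1))).add
    (hcont.integrableOn_Icc.mono_set Ioo_subset_Icc_self)).congr_fun
    (fun r _ => ?_) measurableSet_Ioo
  simp only [Pi.add_apply]
  ring

lemma actI_eq_gammaK_add
    (hg : IntegrableOn (fun r => r * (deriv u r) ^ 2 + ((n : ℝ) ^ 2 / r) * (u r) ^ 2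
      - 2 * (α⁻¹ - κ) * r * (u r) ^ 2 + 2 * α⁻¹ * r * (u r) ^ 2 / (1 + α * (u r) ^ 2))
      (Ioo 0 R))
    (hf : IntegrableOn (fun r => r * logGap α (u r)) (Ioo 0 R)) :
    actI α n κ R u = gammaK α n κ R u + (α ^ 2)⁻¹ * ∫ r in Ioo 0 R, r * logGap α (u r) := by
  -- also true for `α = 0`, where both sides are `0⁻¹ = 0`
  have hα : (α ^ 2)⁻¹ * α = α⁻¹ := by
    rcases eq_or_ne α 0 with rfl | h
    · simp
    · field_simp
  have hsplit : ∀ r, 2 * (α ^ 2)⁻¹ * r * Real.log (1 + α * (u r) ^ 2)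
      = 2 * α⁻¹ * r * (u r) ^ 2 / (1 + α * (u r) ^ 2)
        + 2 * (α ^ 2)⁻¹ * (r * logGap α (u r)) := by
    intro r
    rw [logGap, ← hα]
    ring
  simp only [actI, gammaK, hsplit, ← add_assoc]
  rw [integral_add hg (hf.const_mul _), integral_const_mul]
  ring

end

theorem stmt16_general (α : ℝ) (hα : 0 < α) (n : ℤ) (κ R : ℝ)
    (u : ℝ → ℝ) (hu : MemX R u) (hγ : gammaK α n κ R u = 0) :
    (actI α n κ R u
      = (α ^ 2)⁻¹ * ∫ r in Ioo (0 : ℝ) R,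
          r * (Real.log (1 + α * (u r) ^ 2) - α * (u r) ^ 2 / (1 + α * (u r) ^ 2))) ∧
    ((∃ r ∈ Icc (0 : ℝ) R, u r ≠ 0) → 0 < actI α n κ R u) := by
  have hcont : ContinuousOn (fun r => r * logGap α (u r)) (Icc 0 R) :=
    continuousOn_id.mul ((continuous_logGap hα.le).comp_continuousOn hu.1)
  have hint := hcont.integrableOn_Icc.mono_set (μ := volume) Ioo_subset_Icc_self
  have hI : actI α n κ R u = (α ^ 2)⁻¹ * ∫ r in Ioo 0 R, r * logGap α (u r) := by
    rw [actI_eq_gammaK_add (hu.integrableOn_gammaK_integrand hα.le) hint, hγ, zero_add]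
  refine ⟨hI, fun ⟨r, hr, hur⟩ => ?_⟩
  have hr' := hu.mem_Ioo_of_ne_zero hr hur
  rw [hI]
  exact mul_pos (by positivity) <| setIntegral_pos_of_continuousOn_of_nonneg isOpen_Ioo
    (hcont.mono Ioo_subset_Icc_self) hint (fun s hs => mul_nonneg hs.1.le (logGap_nonneg hα.le _))
    hr' (mul_pos hr'.1 (logGap_pos hα hur))

/-- the action `I_κ` on the Nehari set. -/
theorem stmt16 (α : ℝ) (hα : 0 < α) (n : ℤ) (hn : 1 ≤ |n|) (κ R : ℝ) (hR : 0 < R)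
    (u : ℝ → ℝ) (hu : MemX R u) (hγ : gammaK α n κ R u = 0) :
    (actI α n κ R u
      = (α ^ 2)⁻¹ * ∫ r in Ioo (0 : ℝ) R,
          r * (Real.log (1 + α * (u r) ^ 2) - α * (u r) ^ 2 / (1 + α * (u r) ^ 2))) ∧
    ((∃ r ∈ Icc (0 : ℝ) R, u r ≠ 0) → 0 < actI α n κ R u) :=
  stmt16_general α hα n κ R u hu hγ
end

section
/- Let u be a classical solution of the n-vortex equation with u(r) ≥ 0 for all r ∈ (0,R). If there exists a point r₁ ∈ (0,R) with u(r₁) = 0, then u is identically zero on [0,R]. -/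
open MeasureTheory Set Filter

/-!
At an interior zero `r₁` a nonnegative solution has a minimum, so `u r₁ = u' r₁ = 0`.
Writing the nonlinearity as `u³ / (1 + α u²) = (u² / (1 + α u²)) u`, the solution satisfies the
*linear* equation `u'' = -u' / r + V(r) u`, with `V = vortexPotential` continuous on `(0, R)`.
On each compact subinterval the pair `(u, u')` and the zero function solve the same first-order
system with Lipschitz right-hand side, so uniqueness for ODEs forces `u = 0` on `(0, R)`.
-/

theorem eqOn_zero_of_linear_second_order_of_bounded {y y' p q : ℝ → ℝ} {a b t₀ K : ℝ}
    (hp : ∀ t ∈ Ioo a b, |p t| ≤ K) (hq : ∀ t ∈ Ioo a b, |q t| ≤ K)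
    (hy : ∀ t ∈ Ioo a b, HasDerivAt y (y' t) t)
    (hy' : ∀ t ∈ Ioo a b, HasDerivAt y' (p t * y' t + q t * y t) t)
    (ht₀ : t₀ ∈ Ioo a b) (h0 : y t₀ = 0) (h1 : y' t₀ = 0) :
    EqOn y 0 (Ioo a b) := by
  have hK : 0 ≤ K := (abs_nonneg _).trans (hp t₀ ht₀)
  let V : ℝ → ℝ × ℝ → ℝ × ℝ := fun t z => (z.2, p t * z.2 + q t * z.1)
  have hV : ∀ t ∈ Ioo a b, LipschitzOnWith (1 + 2 * K).toNNReal (V t) univ := by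
    intro t ht
    refine LipschitzOnWith.of_dist_le_mul fun z _ w _ => ?_
    rw [Real.coe_toNNReal _ (by positivity)]
    have h₁ : |z.1 - w.1| ≤ dist z w := le_max_left _ _
    have h₂ : |z.2 - w.2| ≤ dist z w := le_max_right _ _
    have hpt := hp t ht
    have hqt := hq t ht
    have hsecond : |p t * z.2 + q t * z.1 - (p t * w.2 + q t * w.1)| ≤ 2 * K * dist z w := by
      calc |p t * z.2 + q t * z.1 - (p t * w.2 + q t * w.1)|
          = |p t * (z.2 - w.2) + q t * (z.1 - w.1)| := by congr 1; ring
        _ ≤ |p t| * |z.2 - w.2| + |q t| * |z.1 - w.1| := by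
          simpa only [abs_mul] using abs_add_le (p t * (z.2 - w.2)) (q t * (z.1 - w.1))
        _ ≤ K * dist z w + K * dist z w := by gcongr
        _ = 2 * K * dist z w := by ring
    have hdist : 0 ≤ dist z w := dist_nonneg
    refine max_le ?_ ?_
    · exact h₂.trans (by nlinarith)
    · exact hsecond.trans (by nlinarith)
  have hzero := ODE_solution_unique_of_mem_Ioo hV ht₀
    (f := fun t => (y t, y' t)) (g := fun _ => 0)
    (fun t ht => ⟨(hy t ht).prodMk (hy' t ht), trivial⟩)
    (fun t _ => ⟨by simpa [V, Prod.zero_eq_mk] using hasDerivAt_const t (0 : ℝ × ℝ),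
      trivial⟩)
    (by simp [h0, h1])
  exact fun t ht => congrArg Prod.fst (hzero ht)

theorem eqOn_zero_of_linear_second_order {y y' p q : ℝ → ℝ} {a b t₀ : ℝ}
    (hp : ContinuousOn p (Ioo a b)) (hq : ContinuousOn q (Ioo a b))
    (hy : ∀ t ∈ Ioo a b, HasDerivAt y (y' t) t)
    (hy' : ∀ t ∈ Ioo a b, HasDerivAt y' (p t * y' t + q t * y t) t)
    (ht₀ : t₀ ∈ Ioo a b) (h0 : y t₀ = 0) (h1 : y' t₀ = 0) :
    EqOn y 0 (Ioo a b) := by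
  intro t ht
  obtain ⟨c, hac, hc⟩ := exists_between (lt_min ht.1 ht₀.1)
  obtain ⟨d, hd, hdb⟩ := exists_between (max_lt ht.2 ht₀.2)
  have hcd : Icc c d ⊆ Ioo a b := Icc_subset_Ioo hac hdb
  obtain ⟨Kp, hKp⟩ := isCompact_Icc.exists_bound_of_continuousOn (hp.mono hcd)
  obtain ⟨Kq, hKq⟩ := isCompact_Icc.exists_bound_of_continuousOn (hq.mono hcd)
  have hsub : Ioo c d ⊆ Ioo a b := Ioo_subset_Icc_self.trans hcd
  refine eqOn_zero_of_linear_second_order_of_bounded (K := max Kp Kq)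
    (fun s hs => (hKp s (Ioo_subset_Icc_self hs)).trans (le_max_left _ _))
    (fun s hs => (hKq s (Ioo_subset_Icc_self hs)).trans (le_max_right _ _))
    (fun s hs => hy s (hsub hs)) (fun s hs => hy' s (hsub hs))
    ⟨(min_le_right t t₀).trans_lt' hc, (le_max_right t t₀).trans_lt hd⟩ h0 h1
    ⟨(min_le_left t t₀).trans_lt' hc, (le_max_left t t₀).trans_lt hd⟩

noncomputable def vortexPotential (α : ℝ) (n : ℤ) (κ : ℝ) (u : ℝ → ℝ) (r : ℝ) : ℝ :=
  (n : ℝ) ^ 2 / r ^ 2 - 2 * u r ^ 2 / (1 + α * u r ^ 2) + 2 * κ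

theorem continuousOn_vortexPotential {α : ℝ} (hα : 0 ≤ α) (n : ℤ) (κ : ℝ) {u : ℝ → ℝ}
    {R : ℝ} (hu : ContinuousOn u (Ioo 0 R)) :
    ContinuousOn (vortexPotential α n κ u) (Ioo 0 R) := by
  unfold vortexPotential
  refine ((continuousOn_const.div (continuousOn_id.pow 2) fun r hr => ?_).sub
    ((continuousOn_const.mul (hu.pow 2)).div (continuousOn_const.add
      (continuousOn_const.mul (hu.pow 2))) fun r _ => ?_)).add continuousOn_const
  · exact pow_ne_zero 2 hr.1.ne'
  · exact (add_pos_of_pos_of_nonneg one_pos (mul_nonneg hα (sq_nonneg _))).ne'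

namespace IsVortexSol

variable {α : ℝ} {n : ℤ} {κ R : ℝ} {u : ℝ → ℝ}

theorem hasDerivAt_deriv (hu : IsVortexSol α n κ R u) {r : ℝ} (hr : r ∈ Ioo 0 R) :
    HasDerivAt (deriv u) (-r⁻¹ * deriv u r + vortexPotential α n κ u r * u r) r := by
  have hd2 := (hu.2.1 r hr).2.hasDerivAt
  have hprod : HasDerivAt (fun s => s * deriv u s) (1 * deriv u r + r * deriv (deriv u) r) r :=
    (hasDerivAt_id' (x := r)).mul hd2
  have heq := hu.2.2.2.2 r hr
  rw [hprod.deriv] at heq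
  refine hd2.congr_deriv ?_
  have hr0 : r ≠ 0 := hr.1.ne'
  unfold vortexPotential
  linear_combination (norm := skip) r⁻¹ * heq
  field_simp
  ring

theorem eqOn_zero_of_eq_zero_of_deriv_eq_zero (hα : 0 ≤ α) (hu : IsVortexSol α n κ R u)
    {r₁ : ℝ} (hr₁ : r₁ ∈ Ioo 0 R) (h0 : u r₁ = 0) (h1 : deriv u r₁ = 0) :
    EqOn u 0 (Icc 0 R) := by
  have hdiff : ∀ r ∈ Ioo 0 R, HasDerivAt u (deriv u r) r := fun r hr =>
    (hu.2.1 r hr).1.hasDerivAt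
  have hint : EqOn u 0 (Ioo 0 R) :=
    eqOn_zero_of_linear_second_order (p := fun r => -r⁻¹)
      (continuousOn_inv₀.mono fun r hr => hr.1.ne').neg
      (continuousOn_vortexPotential hα n κ fun r hr =>
        (hdiff r hr).continuousAt.continuousWithinAt)
      hdiff (fun r hr => hu.hasDerivAt_deriv hr) hr₁ h0 h1
  intro r hr
  rcases hr.1.eq_or_lt with rfl | hr0
  · exact hu.2.2.1
  rcases hr.2.eq_or_lt with rfl | hrR
  · exact hu.2.2.2.1
  exact hint ⟨hr0, hrR⟩

end IsVortexSol

theorem stmt18_general (α : ℝ) (hα : 0 < α) (n : ℤ) (κ R : ℝ)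
    (u : ℝ → ℝ) (hu : IsVortexSol α n κ R u)
    (hnn : ∀ r ∈ Ioo (0 : ℝ) R, 0 ≤ u r)
    (r₁ : ℝ) (hr₁ : r₁ ∈ Ioo (0 : ℝ) R) (hz : u r₁ = 0) :
    ∀ r ∈ Icc (0 : ℝ) R, u r = 0 := by
  have hmin : IsLocalMin u r₁ := by
    filter_upwards [Ioo_mem_nhds hr₁.1 hr₁.2] with r hr
    rw [hz]
    exact hnn r hr
  exact hu.eqOn_zero_of_eq_zero_of_deriv_eq_zero hα.le hr₁ hz hmin.deriv_eq_zero

/-- a nonnegative solution with an interior zero is identically zero. -/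
theorem stmt18 (α : ℝ) (hα : 0 < α) (n : ℤ) (hn : 1 ≤ |n|) (κ R : ℝ) (hR : 0 < R)
    (u : ℝ → ℝ) (hu : IsVortexSol α n κ R u)
    (hnn : ∀ r ∈ Ioo (0 : ℝ) R, 0 ≤ u r)
    (r₁ : ℝ) (hr₁ : r₁ ∈ Ioo (0 : ℝ) R) (hz : u r₁ = 0) :
    ∀ r ∈ Icc (0 : ℝ) R, u r = 0 :=
  stmt18_general α hα n κ R u hu hnn r₁ hr₁ hz
end
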